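/- arXiv:1605.04568 — 10 statements merged into one kernel-verified Lean document; each statement's English description precedes it below -/
import Mathlib

section
/- Let Ψ be the set of all tuples A = (a_0,…,a_n) of vectors a_j ∈ Q such that Re Σ_{j,k=0}^{n} ⟨a_j,a_k⟩ t_j t_k > 0 for all t_0,…,t_n ≥ 0 with at least one t_j strictly positive. Then Ψ is a relatively open subset of Q^{n+1}, the integral defining F(A) converges absolutely for every A ∈ Ψ, and the function F is holomorphic on Ψ. -/
open MeasureTheory
open scoped BigOperators

noncomputable section

/-- The standard complex bilinear form `⟨z,w⟩ = z₀w₀ + ⋯ + zₙwₙ` on `ℂ^{n+1}`. -/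
def cbil {n : ℕ} (z w : Fin (n + 1) → ℂ) : ℂ := ∑ i, z i * w i

/-- `F(A) = det A ⬝ ∫_{t₀,…,tₙ ≥ 0} exp(−Σ_{j,k} ⟨a_j,a_k⟩ t_j t_k) dt`, where `A` is the
matrix with columns `a₀, …, aₙ`. -/
def Fdet {n : ℕ} (A : Fin (n + 1) → (Fin (n + 1) → ℂ)) : ℂ :=
  (Matrix.of fun i j => A j i).det *
    ∫ t in {t : Fin (n + 1) → ℝ | ∀ i, 0 ≤ t i},
      Complex.exp (-∑ j, ∑ k, cbil (A j) (A k) * (t j * t k))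

/-- The set `Ψ ⊆ Q^{n+1}` of tuples `(a₀,…,aₙ)` of points of the quadric `Q` such that
`Re Σ_{j,k} ⟨a_j,a_k⟩ t_j t_k > 0` for all `t ≥ 0`, `t ≠ 0`. -/
def Psi (n : ℕ) : Set (Fin (n + 1) → (Fin (n + 1) → ℂ)) :=
  {A | (∀ j, cbil (A j) (A j) = 1) ∧
    ∀ t : Fin (n + 1) → ℝ, (∀ i, 0 ≤ t i) → t ≠ 0 →
      0 < (∑ j, ∑ k, cbil (A j) (A k) * (t j * t k)).re}

/-!
Write `Q_B(t) = Σ_{j,k} ⟨b_j, b_k⟩ t_j t_k = ⟨v, v⟩` with `v = Σ_j t_j b_j`. Then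
`Q_B(t) - Q_{B'}(t) = ⟨v_{B - B'}, v_{B + B'}⟩` is `O(‖B - B'‖ ‖t‖²)` locally uniformly in `B`.
Since `Re Q_A` is positive and 2-homogeneous on the orthant, compactness of the unit sphere gives
`Re Q_A(t) ≥ 2c‖t‖²`, hence `Re Q_B(t) ≥ c‖t‖²` for all `B` near `A`: this is the openness of `Ψ`,
and it dominates `exp(-Q_B)` by a Gaussian. The same estimate bounds the `B`-derivative of
`exp(-Q_B(t))` by a multiple of `‖t‖² exp(-c‖t‖²)`, so the integral may be differentiated under the
integral sign, and `F = det · ∫` is holomorphic near `A`.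
-/

open Metric Filter Topology Set Matrix

theorem integrable_pow_norm_mul_exp_neg_mul_sq_norm {E : Type*} [NormedAddCommGroup E]
    [NormedSpace ℝ E] [Nontrivial E] [FiniteDimensional ℝ E] [MeasurableSpace E] [BorelSpace E]
    (μ : Measure E) [μ.IsAddHaarMeasure] {c : ℝ} (hc : 0 < c) (k : ℕ) :
    Integrable (fun x : E => ‖x‖ ^ k * Real.exp (-c * ‖x‖ ^ 2)) μ := by
  rw [integrable_fun_norm_addHaar μ (f := fun y => y ^ k * Real.exp (-c * y ^ 2))]
  refine (integrableOn_rpow_mul_exp_neg_mul_sq hc (s := ((Module.finrank ℝ E - 1 + k : ℕ) : ℝ))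
    (neg_one_lt_zero.trans_le (Nat.cast_nonneg _))).congr_fun (fun y _ => ?_) measurableSet_Ioi
  simp only [Real.rpow_natCast, pow_add, smul_eq_mul, mul_assoc]

theorem norm_fderiv_cexp_neg {H : Type*} [NormedAddCommGroup H] [NormedSpace ℂ H] {g : H → ℂ}
    {x : H} (hg : DifferentiableAt ℂ g x) :
    ‖fderiv ℂ (fun y => Complex.exp (-g y)) x‖ = Real.exp (-(g x).re) * ‖fderiv ℂ g x‖ := by
  have h : HasFDerivAt (fun y => Complex.exp (-g y)) (Complex.exp (-g x) • -fderiv ℂ g x) x :=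
    hg.hasFDerivAt.neg.cexp
  rw [h.fderiv, norm_smul, Complex.norm_exp, norm_neg, Complex.neg_re]

theorem differentiableOn_integral_of_norm_fderiv_le {α H : Type*} [TopologicalSpace α]
    [MeasurableSpace α] [OpensMeasurableSpace α] [NormedAddCommGroup H] [NormedSpace ℂ H]
    [FiniteDimensional ℂ H] [MeasurableSpace H] [BorelSpace H] {μ : Measure α}
    {f : α → H → ℂ} {U : Set H} {bound : α → ℝ} (hU : IsOpen U) (hf : Continuous f.uncurry)
    (hdiff : ∀ t, DifferentiableOn ℂ (f t) U) (hint : ∀ x ∈ U, Integrable (f · x) μ)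
    (hbound_int : Integrable bound μ) (hbound : ∀ᵐ t ∂μ, ∀ x ∈ U, ‖fderiv ℂ (f t) x‖ ≤ bound t) :
    DifferentiableOn ℂ (fun x => ∫ t, f t x ∂μ) U := by
  intro x₀ hx₀
  have hF'_meas : Measurable fun t => fderiv ℂ (f t) x₀ :=
    (measurable_fderiv_with_param ℂ hf).comp (measurable_id.prodMk measurable_const)
  refine (hasFDerivAt_integral_of_dominated_of_fderiv_le (hU.mem_nhds hx₀)
    (eventually_of_mem (hU.mem_nhds hx₀) fun x hx => (hint x hx).aestronglyMeasurable)
    (hint x₀ hx₀) hF'_meas.aestronglyMeasurable hbound hbound_int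
    (ae_of_all _ fun t x hx => ((hdiff t x hx).differentiableAt (hU.mem_nhds hx)).hasFDerivAt)
    ).differentiableAt.differentiableWithinAt

theorem exists_pos_mul_sq_norm_le {ι : Type*} [Fintype ι] [Nonempty ι] {q : (ι → ℝ) → ℝ}
    (hq : Continuous q) (hhom : ∀ s, 0 ≤ s → ∀ t, q (s • t) = s ^ 2 * q t)
    (hpos : ∀ t, 0 ≤ t → t ≠ 0 → 0 < q t) :
    ∃ c > 0, ∀ t, 0 ≤ t → c * ‖t‖ ^ 2 ≤ q t := by
  set K := Ici (0 : ι → ℝ) ∩ sphere 0 1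
  have hK : IsCompact K := (isCompact_sphere 0 1).inter_left isClosed_Ici
  have hKne : K.Nonempty := ⟨1, mem_Ici.2 zero_le_one, by simp⟩
  obtain ⟨t₀, ⟨ht₀, ht₀1⟩, hmin⟩ := hK.exists_isMinOn hKne hq.continuousOn
  refine ⟨q t₀, hpos t₀ ht₀ (ne_zero_of_mem_unit_sphere ⟨t₀, ht₀1⟩), fun t ht => ?_⟩
  rcases eq_or_ne t 0 with rfl | htne
  · simp [show q 0 = 0 by simpa using hhom 0 le_rfl 0]
  have hnorm : 0 < ‖t‖ := norm_pos_iff.2 htne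
  have hu : ‖t‖⁻¹ • t ∈ K :=
    ⟨smul_nonneg (inv_nonneg.2 hnorm.le) ht, by simp [norm_smul, hnorm.ne']⟩
  calc q t₀ * ‖t‖ ^ 2 ≤ q (‖t‖⁻¹ • t) * ‖t‖ ^ 2 := by gcongr; exact hmin hu
    _ = q t := by rw [hhom _ (inv_nonneg.2 hnorm.le), inv_pow]; field_simp

theorem norm_dotProduct_le {R κ : Type*} [NonUnitalSeminormedRing R] [Fintype κ] (u w : κ → R) :
    ‖u ⬝ᵥ w‖ ≤ Fintype.card κ * (‖u‖ * ‖w‖) := by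
  refine (norm_sum_le _ _).trans ?_
  rw [← nsmul_eq_mul]
  refine Finset.sum_le_card_nsmul _ _ _ fun i _ => (norm_mul_le _ _).trans ?_
  exact mul_le_mul (norm_le_pi_norm u i) (norm_le_pi_norm w i) (norm_nonneg _) (norm_nonneg _)

section GramForm

variable {ι κ : Type*} [Fintype ι] [Fintype κ]

-- `cbil` is `dotProduct` by definition, so the exponent in `Psi` and `Fdet` is `gramForm` up to `rfl`.
def gramForm (B : ι → κ → ℂ) (t : ι → ℝ) : ℂ :=
  ∑ j, ∑ k, (B j ⬝ᵥ B k) * (t j * t k)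

theorem gramForm_eq_dotProduct (B : ι → κ → ℂ) (t : ι → ℝ) :
    gramForm B t = (∑ j, (t j : ℂ) • B j) ⬝ᵥ (∑ j, (t j : ℂ) • B j) := by
  simp only [gramForm, sum_dotProduct, dotProduct_sum, smul_dotProduct, dotProduct_smul,
    smul_eq_mul, Finset.mul_sum]
  refine Finset.sum_congr rfl fun j _ => Finset.sum_congr rfl fun k _ => ?_
  rw [dotProduct_comm (B k)]
  ring

theorem re_gramForm_smul (B : ι → κ → ℂ) (s : ℝ) (t : ι → ℝ) :
    (gramForm B (s • t)).re = s ^ 2 * (gramForm B t).re := by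
  have : gramForm B (s • t) = ((s ^ 2 : ℝ) : ℂ) * gramForm B t := by
    simp only [gramForm, Finset.mul_sum, Pi.smul_apply, smul_eq_mul]
    refine Finset.sum_congr rfl fun j _ => Finset.sum_congr rfl fun k _ => ?_
    push_cast
    ring
  rw [this, Complex.re_ofReal_mul]

@[fun_prop]
theorem Continuous.gramForm {X : Type*} [TopologicalSpace X] {f : X → ι → κ → ℂ} {g : X → ι → ℝ}
    (hf : Continuous f) (hg : Continuous g) : Continuous fun x => gramForm (f x) (g x) := by
  unfold _root_.gramForm dotProduct
  fun_prop

theorem differentiable_gramForm (t : ι → ℝ) :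
    Differentiable ℂ fun B : ι → κ → ℂ => gramForm B t := by
  unfold gramForm dotProduct
  fun_prop

theorem norm_sum_ofReal_smul_le (t : ι → ℝ) (B : ι → κ → ℂ) :
    ‖∑ j, (t j : ℂ) • B j‖ ≤ Fintype.card ι * (‖t‖ * ‖B‖) := by
  refine (norm_sum_le _ _).trans ?_
  rw [← nsmul_eq_mul]
  refine Finset.sum_le_card_nsmul _ _ _ fun j _ => ?_
  rw [norm_smul, Complex.norm_real]
  exact mul_le_mul (norm_le_pi_norm t j) (norm_le_pi_norm B j) (norm_nonneg _) (norm_nonneg _)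

theorem norm_gramForm_sub_le (B B' : ι → κ → ℂ) (t : ι → ℝ) :
    ‖gramForm B t - gramForm B' t‖ ≤
      Fintype.card κ * Fintype.card ι ^ 2 * ‖t‖ ^ 2 * (‖B - B'‖ * ‖B + B'‖) := by
  set v : (ι → κ → ℂ) → κ → ℂ := fun B => ∑ j, (t j : ℂ) • B j
  have hsub : v B - v B' = v (B - B') := by simp [v, Finset.sum_sub_distrib, smul_sub]
  have hadd : v B + v B' = v (B + B') := by simp [v, Finset.sum_add_distrib, smul_add]
  have hdiff : gramForm B t - gramForm B' t = v (B - B') ⬝ᵥ v (B + B') := by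
    rw [gramForm_eq_dotProduct, gramForm_eq_dotProduct, ← hsub, ← hadd, sub_dotProduct,
      dotProduct_add, dotProduct_add, dotProduct_comm (v B') (v B)]
    ring
  rw [hdiff]
  refine (norm_dotProduct_le _ _).trans ?_
  calc (Fintype.card κ : ℝ) * (‖v (B - B')‖ * ‖v (B + B')‖)
      ≤ Fintype.card κ * ((Fintype.card ι * (‖t‖ * ‖B - B'‖)) *
          (Fintype.card ι * (‖t‖ * ‖B + B'‖))) := by
        gcongr <;> exact norm_sum_ofReal_smul_le _ _
    _ = _ := by ring

theorem norm_fderiv_gramForm_le {U : Set (ι → κ → ℂ)} {R : ℝ} (hU : IsOpen U)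
    (hR : ∀ B ∈ U, ‖B‖ ≤ R) {B : ι → κ → ℂ} (hB : B ∈ U) (t : ι → ℝ) :
    ‖fderiv ℂ (fun B => gramForm B t) B‖ ≤
      Fintype.card κ * Fintype.card ι ^ 2 * ‖t‖ ^ 2 * (2 * R) := by
  have hR₀ : 0 ≤ R := (norm_nonneg B).trans (hR B hB)
  refine norm_fderiv_le_of_lip' ℂ (by positivity) ?_
  filter_upwards [hU.mem_nhds hB] with B' hB'
  calc ‖gramForm B' t - gramForm B t‖
      ≤ Fintype.card κ * Fintype.card ι ^ 2 * ‖t‖ ^ 2 * (‖B' - B‖ * ‖B' + B‖) :=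
        norm_gramForm_sub_le B' B t
    _ ≤ Fintype.card κ * Fintype.card ι ^ 2 * ‖t‖ ^ 2 * (‖B' - B‖ * (2 * R)) := by
        gcongr
        exact (norm_add_le _ _).trans (by linarith [hR B' hB', hR B hB])
    _ = _ := by ring

variable [Nonempty ι]

theorem exists_pos_eventually_mul_sq_norm_le_re_gramForm {A : ι → κ → ℂ}
    (hA : ∀ t, 0 ≤ t → t ≠ 0 → 0 < (gramForm A t).re) :
    ∃ c > 0, ∀ᶠ B in 𝓝 A, ∀ t, 0 ≤ t → c * ‖t‖ ^ 2 ≤ (gramForm B t).re := by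
  obtain ⟨c, hc, hlow⟩ := exists_pos_mul_sq_norm_le (q := fun t => (gramForm A t).re)
    (by fun_prop) (fun s _ t => re_gramForm_smul A s t) hA
  set K : ℝ := Fintype.card κ * Fintype.card ι ^ 2
  have hsmall : ∀ᶠ B in 𝓝 A, K * (‖B - A‖ * ‖B + A‖) < c / 2 := by
    have hcont : Continuous fun B => K * (‖B - A‖ * ‖B + A‖) := by fun_prop
    exact hcont.continuousAt.eventually_lt continuousAt_const (by simpa using half_pos hc)
  refine ⟨c / 2, half_pos hc, hsmall.mono fun B hB t ht => ?_⟩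
  have hperturb : (gramForm A t).re - (gramForm B t).re ≤ c / 2 * ‖t‖ ^ 2 :=
    calc (gramForm A t).re - (gramForm B t).re
        ≤ ‖gramForm B t - gramForm A t‖ := by
          rw [norm_sub_rev, ← Complex.sub_re]; exact Complex.re_le_norm _
      _ ≤ K * ‖t‖ ^ 2 * (‖B - A‖ * ‖B + A‖) := norm_gramForm_sub_le B A t
      _ = ‖t‖ ^ 2 * (K * (‖B - A‖ * ‖B + A‖)) := by ring
      _ ≤ ‖t‖ ^ 2 * (c / 2) := by gcongr
      _ = c / 2 * ‖t‖ ^ 2 := mul_comm _ _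
  linarith [hlow t ht]

theorem isOpen_setOf_re_gramForm_pos :
    IsOpen {A : ι → κ → ℂ | ∀ t, 0 ≤ t → t ≠ 0 → 0 < (gramForm A t).re} := by
  refine isOpen_iff_mem_nhds.2 fun A hA => ?_
  obtain ⟨c, hc, hB⟩ := exists_pos_eventually_mul_sq_norm_le_re_gramForm hA
  filter_upwards [hB] with B hB t ht htne
  exact (mul_pos hc (pow_pos (norm_pos_iff.2 htne) 2)).trans_le (hB t ht)

theorem integrableOn_cexp_neg_gramForm {B : ι → κ → ℂ} {c : ℝ} (hc : 0 < c)
    (hB : ∀ t, 0 ≤ t → c * ‖t‖ ^ 2 ≤ (gramForm B t).re) :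
    IntegrableOn (fun t => Complex.exp (-gramForm B t)) (Ici 0) := by
  refine (integrable_pow_norm_mul_exp_neg_mul_sq_norm volume hc 0).integrableOn.mono'
    (by fun_prop : Continuous fun t => Complex.exp (-gramForm B t)).aestronglyMeasurable
    (ae_restrict_of_forall_mem measurableSet_Ici fun t ht => ?_)
  rw [Complex.norm_exp, Complex.neg_re, pow_zero, one_mul, neg_mul]
  exact Real.exp_le_exp.2 (neg_le_neg (hB t ht))

theorem differentiableOn_integral_cexp_neg_gramForm {U : Set (ι → κ → ℂ)} {R c : ℝ}
    (hU : IsOpen U) (hR : ∀ B ∈ U, ‖B‖ ≤ R) (hc : 0 < c)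
    (hpos : ∀ B ∈ U, ∀ t, 0 ≤ t → c * ‖t‖ ^ 2 ≤ (gramForm B t).re) :
    DifferentiableOn ℂ (fun B => ∫ t in Ici 0, Complex.exp (-gramForm B t)) U := by
  set K : ℝ := Fintype.card κ * Fintype.card ι ^ 2
  refine differentiableOn_integral_of_norm_fderiv_le (f := fun t B => Complex.exp (-gramForm B t))
    (bound := fun t => K * (2 * R) * (‖t‖ ^ 2 * Real.exp (-c * ‖t‖ ^ 2))) hU
    (by unfold Function.uncurry; fun_prop)
    (fun t => ((differentiable_gramForm t).neg.cexp).differentiableOn)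
    (fun B hB => integrableOn_cexp_neg_gramForm hc (hpos B hB))
    ((integrable_pow_norm_mul_exp_neg_mul_sq_norm volume hc 2).const_mul _).integrableOn
    (ae_restrict_of_forall_mem measurableSet_Ici fun t ht B hB => ?_)
  rw [norm_fderiv_cexp_neg (differentiable_gramForm t B)]
  calc _ ≤ Real.exp (-c * ‖t‖ ^ 2) * (K * ‖t‖ ^ 2 * (2 * R)) :=
        mul_le_mul (Real.exp_le_exp.2 (by linarith [hpos B hB t ht]))
          (norm_fderiv_gramForm_le hU hR hB t) (norm_nonneg _) (Real.exp_pos _).le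
    _ = _ := by ring

end GramForm

/-- `Ψ` is a relatively open subset of `Q^{n+1}`, the integral defining `F(A)` converges
absolutely for every `A ∈ Ψ`, and `F` is holomorphic on `Ψ` (i.e. near every point of `Ψ`
it extends to a holomorphic function on a neighborhood in the ambient space). -/
theorem Psi_open_F_integrable_F_holomorphic (n : ℕ) :
    (∃ U : Set (Fin (n + 1) → (Fin (n + 1) → ℂ)), IsOpen U ∧
      Psi n = U ∩ {A | ∀ j, cbil (A j) (A j) = 1}) ∧
    (∀ A ∈ Psi n,
      IntegrableOn
        (fun t : Fin (n + 1) → ℝ =>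
          Complex.exp (-∑ j, ∑ k, cbil (A j) (A k) * (t j * t k)))
        {t : Fin (n + 1) → ℝ | ∀ i, 0 ≤ t i}) ∧
    (∀ A ∈ Psi n, ∃ W : Set (Fin (n + 1) → (Fin (n + 1) → ℂ)), IsOpen W ∧ A ∈ W ∧
      ∃ g : (Fin (n + 1) → (Fin (n + 1) → ℂ)) → ℂ,
        DifferentiableOn ℂ g W ∧ ∀ B ∈ W ∩ Psi n, g B = Fdet B) := by
  have hdet : Differentiable ℂ fun A : Fin (n + 1) → Fin (n + 1) → ℂ =>
      (Matrix.of fun i j => A j i).det := by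
    simp only [Matrix.det_apply, Matrix.of_apply, Units.smul_def, zsmul_eq_mul]
    fun_prop
  refine ⟨⟨_, isOpen_setOf_re_gramForm_pos, Set.ext fun A => and_comm⟩, fun A hA => ?_,
    fun A hA => ?_⟩
  · obtain ⟨c, hc, hB⟩ := exists_pos_eventually_mul_sq_norm_le_re_gramForm hA.2
    exact integrableOn_cexp_neg_gramForm hc hB.self_of_nhds
  · obtain ⟨c, hc, hB⟩ := exists_pos_eventually_mul_sq_norm_le_re_gramForm hA.2
    obtain ⟨ε, hε, hball⟩ := eventually_nhds_iff_ball.1 hB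
    exact ⟨ball A ε, isOpen_ball, mem_ball_self hε, Fdet, hdet.differentiableOn.mul
      (differentiableOn_integral_cexp_neg_gramForm isOpen_ball
        (fun B hB => (norm_lt_of_mem_ball hB).le) hc hball), fun _ _ => rfl⟩

end
end

section
/- Let Ω ⊂ Q^{n+1} be the set of all tuples A = (a_0,…,a_n) with a_j ∈ Q and |⟨a_j,a_k⟩ − 1| < 1 for all j and k. Then for all A ∈ Ω one has the bound |F(A)| < (π²(n+1)/4)^{(n+1)/4}. In particular F is bounded on Ω. -/
open MeasureTheory
open scoped BigOperators

noncomputable section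

/-- The set `Ω ⊆ Q^{n+1}` of tuples `(a₀,…,aₙ)` of points of the quadric `Q` with
`|⟨a_j,a_k⟩ − 1| < 1` for all `j, k`. -/
def OmegaSet (n : ℕ) : Set (Fin (n + 1) → (Fin (n + 1) → ℂ)) :=
  {A | (∀ j, cbil (A j) (A j) = 1) ∧
    ∀ j k, ‖cbil (A j) (A k) - 1‖ < 1}

/-! The Gram matrix `G = AᵀA = (⟨a_j, a_k⟩)` has `det G = (det A)²`, and on `Ω` its entries have
modulus `< 2`. Applying AM–GM to the eigenvalues of `G Gᴴ` gives
`|det G|² ≤ (‖G‖_F² / (n+1))^{n+1} < (4(n+1))^{n+1}`. Moreover `⟨a_j, a_j⟩ = 1` and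
`Re ⟨a_j, a_k⟩ > 0`, so on the orthant the integrand is dominated by `exp(-Σ tᵢ²)`, whose integral
is `(√π/2)^{n+1}`. Hence `|F(A)|⁴ < (4(n+1))^{n+1} (π²/16)^{n+1} = (π²(n+1)/4)^{n+1}`. -/

open Finset in
theorem prod_le_mean_pow {ι : Type*} {s : Finset ι} (hs : s.Nonempty) {f : ι → ℝ}
    (hf : ∀ i ∈ s, 0 ≤ f i) : ∏ i ∈ s, f i ≤ ((∑ i ∈ s, f i) / #s) ^ #s := by
  have hcard : (#s : ℝ) ≠ 0 := by exact_mod_cast hs.card_pos.ne'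
  have hgm : (∏ i ∈ s, f i) ^ (#s : ℝ)⁻¹ ≤ (∑ i ∈ s, f i) / #s := by
    simpa using Real.geom_mean_le_arith_mean s (fun _ => 1) f (by simp) (by simp [hs]) hf
  have hprod : 0 ≤ ∏ i ∈ s, f i := prod_nonneg hf
  calc ∏ i ∈ s, f i = ((∏ i ∈ s, f i) ^ (#s : ℝ)⁻¹) ^ #s := by
        rw [← Real.rpow_natCast, ← Real.rpow_mul hprod, inv_mul_cancel₀ hcard, Real.rpow_one]
    _ ≤ ((∑ i ∈ s, f i) / #s) ^ #s := pow_le_pow_left₀ (by positivity) hgm _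

namespace Matrix

open Finset
open scoped ComplexOrder

variable {ι 𝕜 : Type*} [Fintype ι] [RCLike 𝕜]

theorem trace_mul_conjTranspose_eq_sum_norm_sq (M : Matrix ι ι 𝕜) :
    (M * Mᴴ).trace = ((∑ i, ∑ j, ‖M i j‖ ^ 2 : ℝ) : 𝕜) := by
  simp [trace, mul_apply, RCLike.mul_conj]

theorem norm_det_sq_le_mean_pow [DecidableEq ι] [Nonempty ι] (M : Matrix ι ι 𝕜) :
    ‖M.det‖ ^ 2 ≤ ((∑ i, ∑ j, ‖M i j‖ ^ 2) / Fintype.card ι) ^ Fintype.card ι := by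
  have hP := posSemidef_self_mul_conjTranspose M
  have hdet : ‖M.det‖ ^ 2 = ∏ i, hP.isHermitian.eigenvalues i := by
    apply RCLike.ofReal_injective (K := 𝕜)
    rw [RCLike.ofReal_pow, ← RCLike.mul_conj, RCLike.ofReal_prod,
      ← hP.isHermitian.det_eq_prod_eigenvalues, det_mul, det_conjTranspose]
    rfl
  have htrace : ∑ i, hP.isHermitian.eigenvalues i = ∑ i, ∑ j, ‖M i j‖ ^ 2 := by
    apply RCLike.ofReal_injective (K := 𝕜)
    rw [RCLike.ofReal_sum, ← hP.isHermitian.trace_eq_sum_eigenvalues,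
      trace_mul_conjTranspose_eq_sum_norm_sq]
  rw [hdet, ← htrace]
  exact prod_le_mean_pow univ_nonempty fun i _ => hP.eigenvalues_nonneg i

theorem norm_det_sq_lt_of_norm_lt [DecidableEq ι] [Nonempty ι] (M : Matrix ι ι 𝕜) {c : ℝ}
    (hM : ∀ i j, ‖M i j‖ < c) : ‖M.det‖ ^ 2 < (Fintype.card ι * c ^ 2) ^ Fintype.card ι := by
  have hcard : (0 : ℝ) < Fintype.card ι := by exact_mod_cast Fintype.card_pos
  have hsum : ∑ i, ∑ j, ‖M i j‖ ^ 2 < Fintype.card ι * (Fintype.card ι * c ^ 2) := by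
    calc ∑ i, ∑ j, ‖M i j‖ ^ 2 < ∑ _i : ι, ∑ _j : ι, c ^ 2 :=
          sum_lt_sum_of_nonempty univ_nonempty fun i _ => sum_lt_sum_of_nonempty univ_nonempty
            fun j _ => pow_lt_pow_left₀ (hM i j) (norm_nonneg _) two_ne_zero
      _ = _ := by simp
  refine (norm_det_sq_le_mean_pow M).trans_lt (pow_lt_pow_left₀ ?_ (by positivity)
    Fintype.card_ne_zero)
  rwa [div_lt_iff₀' hcard]

end Matrix

section Orthant

open Set

variable {ι : Type*} [Fintype ι]

theorem volume_restrict_orthant :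
    (volume : Measure (ι → ℝ)).restrict {t | ∀ i, 0 ≤ t i} =
      Measure.pi fun _ => volume.restrict (Ici 0) := by
  have horthant : {t : ι → ℝ | ∀ i, 0 ≤ t i} = univ.pi fun _ => Ici 0 := by
    ext; simp [Pi.le_def]
  rw [horthant, volume_pi, Measure.restrict_pi_pi]

theorem exp_neg_sum_sq_eq_prod (t : ι → ℝ) :
    Real.exp (-∑ i, t i ^ 2) = ∏ i, Real.exp (-t i ^ 2) := by
  rw [← Finset.sum_neg_distrib, Real.exp_sum]

theorem integrableOn_orthant_exp_neg_sum_sq :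
    IntegrableOn (fun t : ι → ℝ => Real.exp (-∑ i, t i ^ 2)) {t | ∀ i, 0 ≤ t i} := by
  simp_rw [IntegrableOn, volume_restrict_orthant, exp_neg_sum_sq_eq_prod]
  have hgauss : Integrable fun x : ℝ => Real.exp (-x ^ 2) := by
    simpa using integrable_exp_neg_mul_sq one_pos
  exact Integrable.fintype_prod (f := fun _ x => Real.exp (-x ^ 2)) fun _ => hgauss.restrict

theorem integral_orthant_exp_neg_sum_sq :
    ∫ t in {t : ι → ℝ | ∀ i, 0 ≤ t i}, Real.exp (-∑ i, t i ^ 2) =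
      (√Real.pi / 2) ^ Fintype.card ι := by
  rw [volume_restrict_orthant]
  simp_rw [exp_neg_sum_sq_eq_prod]
  rw [integral_fintype_prod_eq_pow (fun x => Real.exp (-x ^ 2)), integral_Ici_eq_integral_Ioi]
  simpa using congrArg (· ^ Fintype.card ι) (integral_gaussian_Ioi 1)

end Orthant

section QuadraticForm

variable {ι : Type*} [Fintype ι] {c : ι → ι → ℂ}

theorem sum_sq_le_re_quadraticForm (hdiag : ∀ j, 1 ≤ (c j j).re) (hre : ∀ j k, 0 ≤ (c j k).re)
    {t : ι → ℝ} (ht : ∀ i, 0 ≤ t i) :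
    ∑ i, t i ^ 2 ≤ (∑ j, ∑ k, c j k * (t j * t k)).re := by
  have hre_sum : (∑ j, ∑ k, c j k * (t j * t k)).re = ∑ j, ∑ k, (c j k).re * (t j * t k) := by
    simp only [Complex.re_sum, ← Complex.ofReal_mul, Complex.re_mul_ofReal]
  rw [hre_sum]
  calc ∑ i, t i ^ 2 ≤ ∑ j, (c j j).re * (t j * t j) :=
        Finset.sum_le_sum fun j _ => by nlinarith [hdiag j, sq_nonneg (t j)]
    _ ≤ ∑ j, ∑ k, (c j k).re * (t j * t k) :=
        Finset.sum_le_sum fun j _ => Finset.single_le_sum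
          (fun k _ => mul_nonneg (hre j k) (mul_nonneg (ht j) (ht k))) (Finset.mem_univ j)

theorem norm_integral_orthant_exp_neg_quadraticForm_le (hdiag : ∀ j, 1 ≤ (c j j).re)
    (hre : ∀ j k, 0 ≤ (c j k).re) :
    ‖∫ t in {t : ι → ℝ | ∀ i, 0 ≤ t i}, Complex.exp (-∑ j, ∑ k, c j k * (t j * t k))‖ ≤
      (√Real.pi / 2) ^ Fintype.card ι := by
  have horthant : MeasurableSet {t : ι → ℝ | ∀ i, 0 ≤ t i} := by
    simpa only [Set.ofPred_forall] using MeasurableSet.iInter fun i => measurableSet_le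
      measurable_const (measurable_pi_apply i)
  rw [← integral_orthant_exp_neg_sum_sq]
  refine norm_integral_le_of_norm_le integrableOn_orthant_exp_neg_sum_sq
    ((ae_restrict_iff' horthant).2 (ae_of_all _ fun t ht => ?_))
  rw [Complex.norm_exp, Real.exp_le_exp, Complex.neg_re, neg_le_neg_iff]
  exact sum_sq_le_re_quadraticForm hdiag hre ht

end QuadraticForm

theorem lt_rpow_div_of_pow_lt {x y : ℝ} {k : ℕ} (hk : k ≠ 0) (m : ℕ) (hy : 0 ≤ y)
    (h : x ^ k < y ^ m) : x < y ^ ((m : ℝ) / k) := by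
  refine lt_of_pow_lt_pow_left₀ k (Real.rpow_nonneg hy _) ?_
  rwa [← Real.rpow_mul_natCast hy, div_mul_cancel₀ _ (by exact_mod_cast hk), Real.rpow_natCast]

namespace Complex

theorem re_pos_of_norm_sub_one_lt {z : ℂ} (hz : ‖z - 1‖ < 1) : 0 < z.re := by
  have := (abs_lt.1 ((abs_re_le_norm (z - 1)).trans_lt hz)).1
  rw [sub_re, one_re] at this
  linarith

theorem norm_lt_two_of_norm_sub_one_lt {z : ℂ} (hz : ‖z - 1‖ < 1) : ‖z‖ < 2 := by
  calc ‖z‖ ≤ ‖(1 : ℂ)‖ + ‖z - 1‖ := norm_le_norm_add_norm_sub' z 1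
    _ < 2 := by rw [norm_one]; linarith

end Complex

theorem det_gram_eq_det_sq {n : ℕ} (A : Fin (n + 1) → Fin (n + 1) → ℂ) :
    (Matrix.of fun j k => cbil (A j) (A k)).det = (Matrix.of fun i j => A j i).det ^ 2 := by
  have hgram : (Matrix.of fun j k => cbil (A j) (A k)) =
      (Matrix.of fun i j => A j i).transpose * Matrix.of fun i j => A j i := by
    ext j k
    simp [Matrix.mul_apply, cbil]
  rw [hgram, Matrix.det_mul, Matrix.det_transpose, sq]

theorem norm_det_pow_four_lt_of_mem_OmegaSet {n : ℕ} {A : Fin (n + 1) → Fin (n + 1) → ℂ}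
    (hA : A ∈ OmegaSet n) :
    ‖(Matrix.of fun i j => A j i).det‖ ^ 4 < (4 * ((n : ℝ) + 1)) ^ (n + 1) := by
  have hgram := Matrix.norm_det_sq_lt_of_norm_lt (Matrix.of fun j k => cbil (A j) (A k))
    (c := 2) fun j k => Complex.norm_lt_two_of_norm_sub_one_lt (hA.2 j k)
  rw [det_gram_eq_det_sq, norm_pow, ← pow_mul, Fintype.card_fin] at hgram
  convert hgram using 2
  push_cast
  ring

theorem norm_Fdet_le_of_mem_OmegaSet {n : ℕ} {A : Fin (n + 1) → Fin (n + 1) → ℂ}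
    (hA : A ∈ OmegaSet n) :
    ‖Fdet A‖ ≤ ‖(Matrix.of fun i j => A j i).det‖ * (√Real.pi / 2) ^ (n + 1) := by
  have hintegral := norm_integral_orthant_exp_neg_quadraticForm_le
    (c := fun j k => cbil (A j) (A k)) (fun j => by simp [hA.1 j])
    fun j k => (Complex.re_pos_of_norm_sub_one_lt (hA.2 j k)).le
  rw [Fintype.card_fin] at hintegral
  rw [Fdet, norm_mul]
  exact mul_le_mul_of_nonneg_left hintegral (norm_nonneg _)

/-- For all `A ∈ Ω` one has `|F(A)| < (π²(n+1)/4)^{(n+1)/4}`; in particular `F` is bounded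
on `Ω`. -/
theorem Fdet_bound_on_Omega (n : ℕ) :
    (∀ A ∈ OmegaSet n,
      ‖Fdet A‖ < (Real.pi ^ 2 * (n + 1) / 4) ^ (((n : ℝ) + 1) / 4)) ∧
    ∃ C : ℝ, ∀ A ∈ OmegaSet n, ‖Fdet A‖ ≤ C := by
  have hbound : ∀ A ∈ OmegaSet n,
      ‖Fdet A‖ < (Real.pi ^ 2 * (n + 1) / 4) ^ (((n : ℝ) + 1) / 4) := by
    intro A hA
    set d := ‖(Matrix.of fun i j => A j i).det‖
    have hsqrt : (√Real.pi / 2) ^ 4 = Real.pi ^ 2 / 16 := by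
      rw [div_pow, show (4 : ℕ) = 2 * 2 from rfl, pow_mul, Real.sq_sqrt Real.pi_pos.le]
      norm_num
    have hpow : (d * (√Real.pi / 2) ^ (n + 1)) ^ 4 < (Real.pi ^ 2 * (n + 1) / 4) ^ (n + 1) :=
      calc (d * (√Real.pi / 2) ^ (n + 1)) ^ 4 = d ^ 4 * (Real.pi ^ 2 / 16) ^ (n + 1) := by
            rw [mul_pow, ← pow_mul, mul_comm (n + 1), pow_mul, hsqrt]
        _ < (4 * ((n : ℝ) + 1)) ^ (n + 1) * (Real.pi ^ 2 / 16) ^ (n + 1) := by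
            gcongr
            exact norm_det_pow_four_lt_of_mem_OmegaSet hA
        _ = (Real.pi ^ 2 * (n + 1) / 4) ^ (n + 1) := by rw [← mul_pow]; ring
    calc ‖Fdet A‖ ≤ d * (√Real.pi / 2) ^ (n + 1) := norm_Fdet_le_of_mem_OmegaSet hA
      _ < _ := by
        convert lt_rpow_div_of_pow_lt four_ne_zero (n + 1) (by positivity) hpow using 2
        push_cast
        ring
  exact ⟨hbound, _, fun A hA => (hbound A hA).le⟩

end
end

section
/- Suppose a_0,…,a_{n+1} are points in Q such that |⟨a_j,a_k⟩ − 1| < 1 for all j and k. Then Σ_{j=0}^{n+1} (−1)^j F(a_0,…,â_j,…,a_{n+1}) = 0, where the hat denotes omission of the j-th point. -/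
/-!
Let `A` be the matrix with columns `a_j`, `G = AᵀA = (⟨a_j, a_k⟩)` its Gram matrix and
`g(t) = exp (-tᵀ G t)` on the orthant `t ≥ 0` of `ℝ^{n+2}`. Integrating `∂g/∂t_j` in `t_j` over
`[0, ∞)` leaves `-g` on the face `t_j = 0`, whose integral is the one in `F(a₀, …, â_j, …, a_{n+1})`.
With `w_j = (-1)^j det(â_j)` the alternating sum is therefore `-∫ Σ_j w_j ∂g/∂t_j = 2 ∫ g · wᵀ G t`,
and `wᵀ G = (A w)ᵀ A = 0`, because `A w = Σ_j (-1)^j det(â_j) a_j` is the Laplace expansion of a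
determinant with a repeated row. The hypotheses give `Re (tᵀ G t) ≥ |t|²` on the orthant, which
makes every integral absolutely convergent and justifies Fubini and the improper fundamental
theorem of calculus.
-/

open MeasureTheory
open scoped BigOperators

noncomputable section

open Filter Topology Set
open scoped Matrix

section Gaussian

variable {ι : Type*} [Fintype ι]

def quadForm (c : Matrix ι ι ℂ) (t : ι → ℝ) : ℂ := ∑ j, ∑ k, c j k * (t j * t k)

def expQuad (c : Matrix ι ι ℂ) (t : ι → ℝ) : ℂ := Complex.exp (-quadForm c t)

/-- The partial derivative of `expQuad c` in `t j` when `c` is symmetric. -/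
def expQuadDeriv (c : Matrix ι ι ℂ) (j : ι) (t : ι → ℝ) : ℂ :=
  -(2 * ∑ k, c j k * t k) * expQuad c t

variable (c : Matrix ι ι ℂ)

theorem continuous_expQuad : Continuous (expQuad c) := by
  unfold expQuad quadForm; fun_prop

theorem continuous_expQuadDeriv (j : ι) : Continuous (expQuadDeriv c j) := by
  unfold expQuadDeriv; have := continuous_expQuad c; fun_prop

theorem sum_sq_le_re_quadForm (hdiag : ∀ j, 1 ≤ (c j j).re) (hpos : ∀ j k, 0 ≤ (c j k).re)
    {t : ι → ℝ} (ht : 0 ≤ t) : ∑ i, t i ^ 2 ≤ (quadForm c t).re := by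
  have hre : (quadForm c t).re = ∑ j, ∑ k, (c j k).re * (t j * t k) := by
    simp only [quadForm, Complex.re_sum, ← Complex.ofReal_mul, Complex.re_mul_ofReal]
  rw [hre]
  refine Finset.sum_le_sum fun j _ => ?_
  calc t j ^ 2 ≤ (c j j).re * (t j * t j) := by nlinarith [hdiag j, sq_nonneg (t j)]
    _ ≤ ∑ k, (c j k).re * (t j * t k) :=
      Finset.single_le_sum (f := fun k => (c j k).re * (t j * t k))
        (fun k _ => mul_nonneg (hpos j k) (mul_nonneg (ht j) (ht k))) (Finset.mem_univ j)

theorem norm_expQuad_le (hdiag : ∀ j, 1 ≤ (c j j).re) (hpos : ∀ j k, 0 ≤ (c j k).re)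
    {t : ι → ℝ} (ht : 0 ≤ t) : ‖expQuad c t‖ ≤ Real.exp (-∑ i, t i ^ 2) := by
  rw [expQuad, Complex.norm_exp, Complex.neg_re]
  exact Real.exp_le_exp.2 (neg_le_neg (sum_sq_le_re_quadForm c hdiag hpos ht))

theorem norm_expQuadDeriv_le (hdiag : ∀ j, 1 ≤ (c j j).re) (hpos : ∀ j k, 0 ≤ (c j k).re)
    (j : ι) {t : ι → ℝ} (ht : 0 ≤ t) :
    ‖expQuadDeriv c j t‖ ≤ ∑ k, 2 * ‖c j k‖ * (|t k| * Real.exp (-∑ i, t i ^ 2)) := by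
  have hsum : ‖∑ k, c j k * (t k : ℂ)‖ ≤ ∑ k, ‖c j k‖ * |t k| :=
    (norm_sum_le _ _).trans_eq (by simp only [norm_mul, Complex.norm_real, Real.norm_eq_abs])
  calc ‖expQuadDeriv c j t‖ = 2 * ‖∑ k, c j k * (t k : ℂ)‖ * ‖expQuad c t‖ := by
        simp [expQuadDeriv]
    _ ≤ 2 * (∑ k, ‖c j k‖ * |t k|) * Real.exp (-∑ i, t i ^ 2) := by
        gcongr
        exact norm_expQuad_le c hdiag hpos ht
    _ = _ := by
        simp only [Finset.mul_sum, Finset.sum_mul]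
        exact Finset.sum_congr rfl fun k _ => by ring

theorem integrable_abs_mul_exp_neg_sum_sq (k : ι) :
    Integrable (fun t : ι → ℝ => |t k| * Real.exp (-∑ i, t i ^ 2)) := by
  classical
  have h : Integrable (fun t : ι → ℝ =>
      ∏ i, (if i = k then |t i| else 1) * Real.exp (-t i ^ 2)) := by
    refine Integrable.fintype_prod (f := fun i x => (if i = k then |x| else 1) * Real.exp (-x ^ 2))
      fun i => ?_
    split_ifs
    · simpa [abs_mul] using (integrable_mul_exp_neg_mul_sq (b := 1) one_pos).abs
    · simpa using integrable_exp_neg_mul_sq (b := 1) one_pos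
  refine h.congr (ae_of_all _ fun t => ?_)
  simp only [Finset.prod_mul_distrib, Finset.prod_ite_eq', Finset.mem_univ, if_true,
    ← Real.exp_sum, Finset.sum_neg_distrib]

theorem integrableOn_expQuadDeriv (hdiag : ∀ j, 1 ≤ (c j j).re)
    (hpos : ∀ j k, 0 ≤ (c j k).re) (j : ι) : IntegrableOn (expQuadDeriv c j) (Ici 0) :=
  Integrable.mono'
    (integrable_finsetSum _ fun k _ =>
      (integrable_abs_mul_exp_neg_sum_sq k).const_mul _).integrableOn
    (continuous_expQuadDeriv c j).aestronglyMeasurable.restrict <|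
    (ae_restrict_iff' measurableSet_Ici).2 <| ae_of_all _ fun _ ht =>
      norm_expQuadDeriv_le c hdiag hpos j ht

end Gaussian

theorem hasDerivAt_cexp_neg_quadratic (a b C : ℂ) (y : ℝ) :
    HasDerivAt (fun y : ℝ => Complex.exp (-(a * y ^ 2 + 2 * b * y + C)))
      (-(2 * (a * y + b)) * Complex.exp (-(a * y ^ 2 + 2 * b * y + C))) y := by
  have hpoly : HasDerivAt (fun z : ℂ => -(a * z ^ 2 + 2 * b * z + C)) (-(2 * (a * y + b))) y := by
    refine ((((hasDerivAt_pow 2 (y : ℂ)).const_mul a).fun_add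
      ((hasDerivAt_id' (y : ℂ)).const_mul (2 * b))).add_const C).fun_neg.congr_deriv ?_
    ring
  simpa only [mul_comm] using hpoly.cexp.comp_ofReal

section Face

variable {ν : ℕ} (c : Matrix (Fin (ν + 1)) (Fin (ν + 1)) ℂ) (j : Fin (ν + 1))

theorem quadForm_insertNth (hc : c.IsSymm) (y : ℝ) (s : Fin ν → ℝ) :
    quadForm c (j.insertNth y s) = c j j * y ^ 2 + 2 * (∑ p, c j (j.succAbove p) * s p) * y
      + quadForm (c.submatrix j.succAbove j.succAbove) s := by
  simp only [quadForm, Fin.sum_univ_succAbove _ j, Fin.insertNth_apply_same,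
    Fin.insertNth_apply_succAbove, Matrix.submatrix_apply, Finset.sum_add_distrib,
    hc.apply j]
  have hcross : ∑ p, c j (j.succAbove p) * ((y : ℂ) * s p)
      + ∑ p, c j (j.succAbove p) * ((s p : ℂ) * y) = 2 * (∑ p, c j (j.succAbove p) * s p) * y := by
    rw [← Finset.sum_add_distrib, Finset.mul_sum, Finset.sum_mul]
    exact Finset.sum_congr rfl fun p _ => by ring
  linear_combination hcross

theorem sum_mul_insertNth (y : ℝ) (s : Fin ν → ℝ) :
    ∑ k, c j k * ((j.insertNth y s : Fin (ν + 1) → ℝ) k : ℂ)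
      = c j j * y + ∑ p, c j (j.succAbove p) * s p := by
  simp [Fin.sum_univ_succAbove _ j]

theorem hasDerivAt_expQuad_insertNth (hc : c.IsSymm) (s : Fin ν → ℝ) (y : ℝ) :
    HasDerivAt (fun y => expQuad c (j.insertNth y s)) (expQuadDeriv c j (j.insertNth y s)) y := by
  simp only [expQuadDeriv, expQuad, quadForm_insertNth c j hc, sum_mul_insertNth]
  exact hasDerivAt_cexp_neg_quadratic _ _ _ y

theorem tendsto_expQuad_insertNth_atTop (hdiag : ∀ j, 1 ≤ (c j j).re)
    (hpos : ∀ j k, 0 ≤ (c j k).re) {s : Fin ν → ℝ} (hs : 0 ≤ s) :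
    Tendsto (fun y => expQuad c (j.insertNth y s)) atTop (𝓝 0) := by
  have hbound : ∀ᶠ y in atTop, ‖expQuad c (j.insertNth y s)‖ ≤ Real.exp (-y ^ 2) := by
    filter_upwards [eventually_ge_atTop 0] with y hy
    refine (norm_expQuad_le c hdiag hpos (Fin.le_insertNth_iff.2 ⟨hy, hs⟩)).trans ?_
    gcongr
    simpa using Finset.single_le_sum (f := fun i => (j.insertNth y s : Fin (ν + 1) → ℝ) i ^ 2)
      (fun i _ => sq_nonneg _) (Finset.mem_univ j)
  refine squeeze_zero_norm' hbound ?_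
  exact Real.tendsto_exp_atBot.comp (tendsto_neg_atTop_atBot.comp (tendsto_pow_atTop two_ne_zero))

theorem integral_Ioi_expQuadDeriv_insertNth (hc : c.IsSymm) (hdiag : ∀ j, 1 ≤ (c j j).re)
    (hpos : ∀ j k, 0 ≤ (c j k).re) {s : Fin ν → ℝ} (hs : 0 ≤ s)
    (hint : IntegrableOn (fun y => expQuadDeriv c j (j.insertNth y s)) (Ioi 0)) :
    ∫ y in Ioi 0, expQuadDeriv c j (j.insertNth y s)
      = -expQuad (c.submatrix j.succAbove j.succAbove) s := by
  rw [integral_Ioi_of_hasDerivAt_of_tendsto' (fun y _ => hasDerivAt_expQuad_insertNth c j hc s y)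
    hint (tendsto_expQuad_insertNth_atTop c j hdiag hpos hs), zero_sub, expQuad, expQuad,
    quadForm_insertNth c j hc]
  simp

end Face

section Orthant

variable {ν : ℕ} {E : Type*} [NormedAddCommGroup E] (j : Fin (ν + 1))

theorem preimage_insertNth_Ici_zero :
    (fun p : ℝ × (Fin ν → ℝ) => (j.insertNth p.1 p.2 : Fin (ν + 1) → ℝ)) ⁻¹' Ici 0
      = Ici 0 ×ˢ Ici 0 := by
  ext ⟨y, s⟩
  simp [Pi.le_def, Fin.forall_iff_succAbove j]

theorem volume_preserving_insertNth :
    MeasurePreserving (fun p : ℝ × (Fin ν → ℝ) => (j.insertNth p.1 p.2 : Fin (ν + 1) → ℝ)) :=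
  (volume_preserving_piFinSuccAbove (fun _ : Fin (ν + 1) => ℝ) j).symm _

theorem integrableOn_insertNth_Ici_prod {f : (Fin (ν + 1) → ℝ) → E}
    (hf : IntegrableOn f (Ici 0)) :
    IntegrableOn (fun p : ℝ × (Fin ν → ℝ) => f (j.insertNth p.1 p.2)) (Ici 0 ×ˢ Ici 0) := by
  rw [← preimage_insertNth_Ici_zero j]
  exact ((volume_preserving_insertNth j).integrableOn_comp_preimage
    (MeasurableEquiv.piFinSuccAbove (fun _ => ℝ) j).symm.measurableEmbedding).2 hf

theorem setIntegral_Ici_zero_insertNth [NormedSpace ℝ E] [CompleteSpace E]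
    {f : (Fin (ν + 1) → ℝ) → E} (hf : IntegrableOn f (Ici 0)) :
    ∫ t in Ici 0, f t = ∫ s in Ici (0 : Fin ν → ℝ), ∫ y in Ici 0, f (j.insertNth y s) := by
  have hint := integrableOn_insertNth_Ici_prod j hf
  rw [IntegrableOn, Measure.volume_eq_prod, ← Measure.prod_restrict] at hint
  rw [← integral_prod_symm _ hint, Measure.prod_restrict, ← Measure.volume_eq_prod,
    ← preimage_insertNth_Ici_zero j, ← (volume_preserving_insertNth j).setIntegral_preimage_emb
      (MeasurableEquiv.piFinSuccAbove (fun _ => ℝ) j).symm.measurableEmbedding]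

theorem ae_integrableOn_insertNth {f : (Fin (ν + 1) → ℝ) → E} (hf : IntegrableOn f (Ici 0)) :
    ∀ᵐ s ∂volume.restrict (Ici (0 : Fin ν → ℝ)),
      IntegrableOn (fun y => f (j.insertNth y s)) (Ici 0) := by
  have hint := integrableOn_insertNth_Ici_prod j hf
  rw [IntegrableOn, Measure.volume_eq_prod, ← Measure.prod_restrict] at hint
  exact hint.prod_left_ae

end Orthant

theorem setIntegral_Ici_expQuadDeriv {ν : ℕ} (c : Matrix (Fin (ν + 1)) (Fin (ν + 1)) ℂ)
    (hc : c.IsSymm) (hdiag : ∀ j, 1 ≤ (c j j).re) (hpos : ∀ j k, 0 ≤ (c j k).re)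
    (j : Fin (ν + 1)) :
    ∫ t in Ici 0, expQuadDeriv c j t
      = -∫ s in Ici 0, expQuad (c.submatrix j.succAbove j.succAbove) s := by
  have hint := integrableOn_expQuadDeriv c hdiag hpos j
  rw [setIntegral_Ici_zero_insertNth j hint, ← integral_neg]
  refine setIntegral_congr_ae measurableSet_Ici ?_
  filter_upwards [ae_restrict_iff' measurableSet_Ici |>.1 (ae_integrableOn_insertNth j hint)]
    with s hs_int hs
  rw [integral_Ici_eq_integral_Ioi, integral_Ioi_expQuadDeriv_insertNth c j hc hdiag hpos hs
    ((hs_int hs).mono_set Ioi_subset_Ici_self)]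

theorem Matrix.mulVec_alternating_det_submatrix_succAbove {R : Type*} [CommRing R] {n : ℕ}
    (M : Matrix (Fin (n + 1)) (Fin (n + 2)) R) :
    M *ᵥ (fun j => (-1) ^ (j : ℕ) * (M.submatrix id j.succAbove).det) = 0 := by
  ext i
  -- Laplace expansion along the first row of `M` with its row `i` stacked on top
  have hrep : (Matrix.of (Matrix.vecCons (M i) M)).det = 0 :=
    Matrix.det_zero_of_row_eq (i := 0) (j := i.succ) (Fin.succ_ne_zero i).symm rfl
  rw [Matrix.det_succ_row_zero] at hrep
  simp only [Matrix.mulVec, dotProduct, Pi.zero_apply, ← hrep]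
  refine Finset.sum_congr rfl fun j _ => ?_
  have hsub : (Matrix.of (Matrix.vecCons (M i) M)).submatrix Fin.succ j.succAbove
      = M.submatrix id j.succAbove := rfl
  rw [hsub]
  change M i j * _ = _ * M i j * _
  ring

theorem Complex.re_pos_of_norm_sub_one_lt_s5 {z : ℂ} (hz : ‖z - 1‖ < 1) : 0 < z.re := by
  have h := (Complex.abs_re_le_norm (z - 1)).trans_lt hz
  rw [Complex.sub_re, Complex.one_re] at h
  linarith [(abs_lt.1 h).1]

theorem sum_mul_expQuadDeriv_eq_zero {ι : Type*} [Fintype ι] (c : Matrix ι ι ℂ) {w : ι → ℂ}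
    (hw : w ᵥ* c = 0) (t : ι → ℝ) : ∑ j, w j * expQuadDeriv c j t = 0 := by
  have hlin : ∑ j, w j * ∑ k, c j k * t k = 0 := by
    have h := Matrix.dotProduct_mulVec w c (fun k => (t k : ℂ))
    rwa [hw, zero_dotProduct] at h
  calc ∑ j, w j * expQuadDeriv c j t = -2 * expQuad c t * ∑ j, w j * ∑ k, c j k * t k := by
        rw [Finset.mul_sum]
        exact Finset.sum_congr rfl fun j _ => by rw [expQuadDeriv]; ring
    _ = 0 := by rw [hlin, mul_zero]

/-- Suppose `a₀, …, a_{n+1}` are points of the quadric `Q = {z | ⟨z,z⟩ = 1}` such that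
`|⟨a_j,a_k⟩ − 1| < 1` for all `j, k`.  Then
`Σ_{j=0}^{n+1} (−1)^j F(a₀, …, â_j, …, a_{n+1}) = 0`. -/
theorem Fdet_alternating_sum_zero
    (n : ℕ) (a : Fin (n + 2) → (Fin (n + 1) → ℂ))
    (hQ : ∀ j, cbil (a j) (a j) = 1)
    (hclose : ∀ j k, ‖cbil (a j) (a k) - 1‖ < 1) :
    ∑ j : Fin (n + 2), (-1 : ℂ) ^ (j : ℕ) * Fdet (fun i => a (j.succAbove i)) = 0 := by
  set M : Matrix (Fin (n + 1)) (Fin (n + 2)) ℂ := Matrix.of fun i j => a j i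
  set w : Fin (n + 2) → ℂ := fun j => (-1) ^ (j : ℕ) * (M.submatrix id j.succAbove).det
  have hgram : ∀ j k, (Mᵀ * M) j k = cbil (a j) (a k) := fun _ _ => rfl
  have hsymm : (Mᵀ * M).IsSymm := by
    rw [Matrix.IsSymm, Matrix.transpose_mul, Matrix.transpose_transpose]
  have hdiag : ∀ j, 1 ≤ ((Mᵀ * M) j j).re := fun j => by rw [hgram, hQ j, Complex.one_re]
  have hpos : ∀ j k, 0 ≤ ((Mᵀ * M) j k).re := fun j k =>
    (Complex.re_pos_of_norm_sub_one_lt_s5 (hclose j k)).le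
  have hw : w ᵥ* (Mᵀ * M) = 0 := by
    rw [← Matrix.vecMul_vecMul, Matrix.vecMul_transpose,
      Matrix.mulVec_alternating_det_submatrix_succAbove, Matrix.zero_vecMul]
  have hF : ∀ j : Fin (n + 2), (-1 : ℂ) ^ (j : ℕ) * Fdet (fun i => a (j.succAbove i))
      = -∫ t in Ici 0, w j * expQuadDeriv (Mᵀ * M) j t := fun j => by
    rw [integral_const_mul, setIntegral_Ici_expQuadDeriv _ hsymm hdiag hpos j]
    change _ * ((M.submatrix id j.succAbove).det *
      ∫ t in Ici 0, expQuad ((Mᵀ * M).submatrix j.succAbove j.succAbove) t) = _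
    simp only [w]
    ring
  rw [Finset.sum_congr rfl fun j _ => hF j, Finset.sum_neg_distrib,
    ← integral_finsetSum _ fun j _ => (integrableOn_expQuadDeriv _ hdiag hpos j).const_mul (w j)]
  simp only [sum_mul_expQuadDeriv_eq_zero _ hw, integral_zero, neg_zero]

end
end

section
/- Let K be a finite flag simplicial complex, let ≻ be a hereditary ordering of K, and let r be a positive integer. Suppose that for any two simplices σ, τ ∈ K with dim σ = dim τ = r and μ(σ) = μ(τ), one has σ ∪ τ ∈ K. Then K collapses on a subcomplex of dimension less than r. -/
open Finset

variable {V : Type*} [DecidableEq V]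

/-- `K` is the set of simplices of a finite abstract simplicial complex: it contains the
empty simplex and is closed under taking subsets. -/
def IsComplex (K : Finset (Finset V)) : Prop :=
  ∅ ∈ K ∧ ∀ σ ∈ K, ∀ τ ⊆ σ, τ ∈ K

/-- A simplicial complex is flag if every set of its vertices that are pairwise joined by
edges of the complex is a simplex of the complex. -/
def IsFlag (K : Finset (Finset V)) : Prop :=
  ∀ σ : Finset V, (∀ u ∈ σ, ({u} : Finset V) ∈ K) →
    (∀ u ∈ σ, ∀ v ∈ σ, u ≠ v → ({u, v} : Finset V) ∈ K) → σ ∈ K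

/-- `(σ, τ)` is a free pair of `K`: `τ` is a facet of the nonempty simplex `σ`, `σ` is
maximal with respect to inclusion in `K`, and `σ` is the only simplex of `K` properly
containing `τ`. -/
def IsFreePair (K : Finset (Finset V)) (σ τ : Finset V) : Prop :=
  σ ∈ K ∧ τ ∈ K ∧ τ.Nonempty ∧ τ ⊆ σ ∧ τ.card + 1 = σ.card ∧
    (∀ ρ ∈ K, σ ⊆ ρ → ρ = σ) ∧ (∀ ρ ∈ K, τ ⊆ ρ → ρ = τ ∨ ρ = σ)

/-- Elementary simplicial collapse: removal of a free pair. -/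
def ElemCollapse (K K' : Finset (Finset V)) : Prop :=
  ∃ σ τ : Finset V, IsFreePair K σ τ ∧ K' = (K.erase σ).erase τ

/-- `K` collapses on the subcomplex `L` if `L` is obtained from `K` by a finite sequence
of elementary simplicial collapses. -/
def CollapsesTo (K L : Finset (Finset V)) : Prop :=
  Relation.ReflTransGen ElemCollapse K L

/-- A hereditary ordering of (the simplices of) a finite simplicial complex `K`:
a strict total ordering `succ` (`succ σ τ` meaning `σ ≻ τ`) of the simplices of `K`,
together with the induced function `mu` assigning to each nonempty simplex of `K` its
largest facet, such that `σ ≻ τ` whenever `dim σ > dim τ`, and `σ ≻ τ` whenever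
`μ(σ) ≻ μ(τ)`. -/
structure HereditaryOrder (K : Finset (Finset V)) where
  succ : Finset V → Finset V → Prop
  mu : Finset V → Finset V
  irrefl : ∀ σ ∈ K, ¬ succ σ σ
  trans : ∀ σ ∈ K, ∀ τ ∈ K, ∀ ρ ∈ K, succ σ τ → succ τ ρ → succ σ ρ
  total : ∀ σ ∈ K, ∀ τ ∈ K, σ ≠ τ → succ σ τ ∨ succ τ σ
  mu_subset : ∀ σ ∈ K, σ.Nonempty → mu σ ⊆ σ
  mu_card : ∀ σ ∈ K, σ.Nonempty → (mu σ).card + 1 = σ.card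
  mu_greatest : ∀ σ ∈ K, σ.Nonempty → ∀ τ ⊆ σ, τ.card + 1 = σ.card → τ ≠ mu σ →
    succ (mu σ) τ
  dim_succ : ∀ σ ∈ K, ∀ τ ∈ K, τ.card < σ.card → succ σ τ
  hered : ∀ σ ∈ K, ∀ τ ∈ K, σ.Nonempty → τ.Nonempty → succ (mu σ) (mu τ) → succ σ τ

lemma HO_asym {K : Finset (Finset V)} (h : HereditaryOrder K) {σ τ : Finset V}
    (hσ : σ ∈ K) (hτ : τ ∈ K) (h1 : h.succ σ τ) (h2 : h.succ τ σ) : False :=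
  h.irrefl σ hσ (h.trans σ hσ τ hτ σ hσ h1 h2)

lemma facet_decomp {τ σ : Finset V} (hsub : τ ⊆ σ) (hcard : τ.card + 1 = σ.card) :
    ∃ a, a ∉ τ ∧ σ = insert a τ := by
  have h1 : (σ \ τ).card = 1 := by rw [card_sdiff_of_subset hsub]; omega
  obtain ⟨a, ha⟩ := card_eq_one.mp h1
  have ha' : a ∈ σ \ τ := ha ▸ mem_singleton_self a
  rw [mem_sdiff] at ha'
  refine ⟨a, ha'.2, ?_⟩
  refine (eq_of_subset_of_card_le (insert_subset ha'.1 hsub) ?_).symm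
  rw [card_insert_of_notMem ha'.2]; omega

lemma exists_best {K : Finset (Finset V)} (R : Finset V → Finset V → Prop)
    (htr : ∀ a ∈ K, ∀ b ∈ K, ∀ c ∈ K, R a b → R b c → R a c)
    (hto : ∀ a ∈ K, ∀ b ∈ K, a ≠ b → R a b ∨ R b a) :
    ∀ S : Finset (Finset V), S ⊆ K → S.Nonempty → ∃ g ∈ S, ∀ x ∈ S, x ≠ g → R g x := by
  intro S
  induction S using Finset.induction_on with
  | empty => intro _ hne; exact absurd hne (by simp)
  | @insert a s ha ih =>
    intro hsub hne
    by_cases hs : s.Nonempty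
    · obtain ⟨g, hgs, hg⟩ := ih (fun x hx => hsub (mem_insert_of_mem hx)) hs
      have haK : a ∈ K := hsub (mem_insert_self a s)
      have hgK : g ∈ K := hsub (mem_insert_of_mem hgs)
      have hag : a ≠ g := fun e => ha (e ▸ hgs)
      rcases hto a haK g hgK hag with h1 | h1
      · refine ⟨a, mem_insert_self a s, ?_⟩
        intro x hx hxa
        rcases mem_insert.mp hx with rfl | hxs
        · exact absurd rfl hxa
        · by_cases hxg : x = g
          · exact hxg ▸ h1
          · exact htr a haK g hgK x (hsub (mem_insert_of_mem hxs)) h1 (hg x hxs hxg)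
      · refine ⟨g, mem_insert_of_mem hgs, ?_⟩
        intro x hx hxg
        rcases mem_insert.mp hx with rfl | hxs
        · exact h1
        · exact hg x hxs hxg
    · rw [not_nonempty_iff_eq_empty] at hs
      subst hs
      refine ⟨a, mem_insert_self a ∅, ?_⟩
      intro x hx hxa
      simp at hx
      exact absurd hx hxa

set_option linter.unusedSectionVars false

lemma factF {K : Finset (Finset V)} (h : HereditaryOrder K) (hK : IsComplex K)
    {Y η : Finset V} (hY : Y ∈ K) (h2 : 2 ≤ Y.card)
    (hsub : η ⊆ Y) (hcard : η.card + 1 = Y.card) (hne : η ≠ h.mu Y)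
    (hss : h.mu (h.mu Y) ⊆ η) : h.mu η = h.mu (h.mu Y) := by
  have hYne : Y.Nonempty := card_pos.mp (by omega)
  have hμYsub := h.mu_subset Y hY hYne
  have hμY : h.mu Y ∈ K := hK.2 Y hY _ hμYsub
  have hμYcard := h.mu_card Y hY hYne
  have hμYne : (h.mu Y).Nonempty := card_pos.mp (by omega)
  have hμμcard := h.mu_card _ hμY hμYne
  have hη : η ∈ K := hK.2 Y hY η hsub
  have hηne : η.Nonempty := card_pos.mp (by omega)
  by_contra hne2
  have hgr : h.succ (h.mu η) (h.mu (h.mu Y)) :=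
    h.mu_greatest η hη hηne _ hss (by omega) (fun e => hne2 e.symm)
  have h1 : h.succ η (h.mu Y) := h.hered η hη _ hμY hηne hμYne hgr
  have h2' : h.succ (h.mu Y) η := h.mu_greatest Y hY hYne η hsub hcard hne
  exact HO_asym h hη hμY h1 h2'

inductive MuChain {K : Finset (Finset V)} (h : HereditaryOrder K) (m : Finset V) :
    Finset V → Prop
  | refl : MuChain h m m
  | step (M : Finset V) : MuChain h m M → M.Nonempty → MuChain h m (h.mu M)

lemma muChain_sub {K : Finset (Finset V)} (h : HereditaryOrder K) (hK : IsComplex K)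
    {m : Finset V} (hm : m ∈ K) {M : Finset V} (hch : MuChain h m M) :
    M ⊆ m ∧ M ∈ K := by
  induction hch with
  | refl => exact ⟨subset_rfl, hm⟩
  | step M hc hne ih =>
    have hsub := h.mu_subset M ih.2 hne
    exact ⟨hsub.trans ih.1, hK.2 M ih.2 _ hsub⟩

lemma lemP {K : Finset (Finset V)} (h : HereditaryOrder K) (hK : IsComplex K)
    {m : Finset V} {c : V} (hc : c ∉ m)
    (hcm : insert c m ∈ K) (hmc : h.mu (insert c m) = m) :
    ∀ {M : Finset V}, MuChain h m M → ∀ T ⊆ m, T.card + 1 = M.card →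
      h.succ M (insert c T) := by
  have hmK : m ∈ K := hK.2 _ hcm m (subset_insert c m)
  intro M hM
  induction hM with
  | refl =>
    intro T hT hTc
    have hcT : c ∉ T := fun hmem => hc (hT hmem)
    have hres := h.mu_greatest (insert c m) hcm (insert_nonempty c m) (insert c T)
      (insert_subset_insert c hT)
      (by rw [card_insert_of_notMem hcT, card_insert_of_notMem hc]; omega)
      (by rw [hmc]; intro e; exact hc (e ▸ mem_insert_self c T))
    rwa [hmc] at hres
  | step M hch hne ih =>
    intro T hT hTc
    obtain ⟨hMm, hMK⟩ := muChain_sub h hK hmK hch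
    have hμMc := h.mu_card M hMK hne
    have hmne : m.Nonempty := hne.mono hMm
    have hlt : T.card < m.card := by
      have := card_le_card hMm; omega
    have hsd : (m \ T).Nonempty := by
      rw [← card_pos, card_sdiff_of_subset hT]; omega
    obtain ⟨x, hx⟩ := hsd
    rw [mem_sdiff] at hx
    have hT'm : insert x T ⊆ m := insert_subset hx.1 hT
    have hT'c : (insert x T).card + 1 = M.card := by
      rw [card_insert_of_notMem hx.2]; omega
    have hIH : h.succ M (insert c (insert x T)) := ih (insert x T) hT'm hT'c
    have hγK : insert c (insert x T) ∈ K := hK.2 _ hcm _ (insert_subset_insert c hT'm)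
    have hγne : (insert c (insert x T)).Nonempty := insert_nonempty _ _
    have hcT' : c ∉ insert x T := fun hmem => hc (hT'm hmem)
    have hcT : c ∉ T := fun hmem => hc (hT hmem)
    have hμγK : h.mu (insert c (insert x T)) ∈ K :=
      hK.2 _ hγK _ (h.mu_subset _ hγK hγne)
    have hμMK : h.mu M ∈ K := hK.2 M hMK _ (h.mu_subset M hMK hne)
    have hnot : ¬ h.succ (h.mu (insert c (insert x T))) (h.mu M) := by
      intro hcon
      exact HO_asym h hγK hMK (h.hered _ hγK M hMK hγne hne hcon) hIH
    have hcT_sub : insert c T ⊆ insert c (insert x T) :=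
      insert_subset_insert c (subset_insert x T)
    have hcTcard : (insert c T).card + 1 = (insert c (insert x T)).card := by
      rw [card_insert_of_notMem hcT, card_insert_of_notMem hcT',
        card_insert_of_notMem hx.2]
    have hcTK : insert c T ∈ K := hK.2 _ hγK _ hcT_sub
    have hμMmem : c ∉ h.mu M := fun hmem => hc (hMm (h.mu_subset M hMK hne hmem))
    by_cases hμγ : h.mu (insert c (insert x T)) = insert c T
    · have hneq : h.mu M ≠ h.mu (insert c (insert x T)) := by
        rw [hμγ]; intro e; exact hμMmem (e ▸ mem_insert_self c T)
      rcases h.total _ hμMK _ hμγK hneq with h1 | h1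
      · rwa [hμγ] at h1
      · exact absurd h1 hnot
    · have hgr : h.succ (h.mu (insert c (insert x T))) (insert c T) :=
        h.mu_greatest _ hγK hγne _ hcT_sub hcTcard (fun e => hμγ e.symm)
      by_cases heq : h.mu M = h.mu (insert c (insert x T))
      · rw [heq]; exact hgr
      · rcases h.total _ hμMK _ hμγK heq with h1 | h1
        · exact h.trans _ hμMK _ hμγK _ hcTK h1 hgr
        · exact absurd h1 hnot

lemma descLemma {K : Finset (Finset V)} (h : HereditaryOrder K) (hK : IsComplex K)
    {m : Finset V} {a b : V} (ha : a ∉ m) (hb : b ∉ m) (hab : a ≠ b)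
    (hπ : insert a (insert b m) ∈ K)
    (hma : h.mu (insert a m) = m) (hmb : h.mu (insert b m) = m) :
    ∀ n : ℕ, ∀ X M : Finset V, X.card ≤ n → X ∈ K → X ⊆ insert a (insert b m) →
      MuChain h m M → h.succ X M → X.card = M.card → (a ∈ X ∨ b ∈ X) → False := by
  have hmsub : m ⊆ insert a (insert b m) := (subset_insert b m).trans (subset_insert a _)
  have hmK : m ∈ K := hK.2 _ hπ m hmsub
  have haK : insert a m ∈ K := hK.2 _ hπ _ (insert_subset_insert a (subset_insert b m))
  have hbK : insert b m ∈ K := hK.2 _ hπ _ (subset_insert a _)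
  intro n
  induction n with
  | zero =>
    intro X M hle _ _ _ _ _ hmem
    have : X.Nonempty := by rcases hmem with hc | hc; exacts [⟨a, hc⟩, ⟨b, hc⟩]
    have := card_pos.mpr this; omega
  | succ n ih =>
    intro X M hle hXK hXsub hch hsucc hcard hmem
    obtain ⟨hMm, hMK⟩ := muChain_sub h hK hmK hch
    have hXne : X.Nonempty := by rcases hmem with hc | hc; exacts [⟨a, hc⟩, ⟨b, hc⟩]
    by_cases hboth : a ∈ X ∧ b ∈ X
    · have hMne : M.Nonempty := card_pos.mp (by rw [← hcard]; exact card_pos.mpr hXne)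
      have hμXc := h.mu_card X hXK hXne
      have hμMc := h.mu_card M hMK hMne
      have hμXsub := h.mu_subset X hXK hXne
      have hμMsub := h.mu_subset M hMK hMne
      have hμXK : h.mu X ∈ K := hK.2 X hXK _ hμXsub
      have hμMK : h.mu M ∈ K := hK.2 M hMK _ hμMsub
      have hmemμ : a ∈ h.mu X ∨ b ∈ h.mu X := by
        obtain ⟨w, hw, hXw⟩ := facet_decomp hμXsub hμXc
        have h1 : a = w ∨ a ∈ h.mu X := by
          have := hboth.1; rw [hXw] at this; exact mem_insert.mp this
        have h2 : b = w ∨ b ∈ h.mu X := by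
          have := hboth.2; rw [hXw] at this; exact mem_insert.mp this
        rcases h1 with rfl | h1
        · rcases h2 with rfl | h2
          · exact absurd rfl hab
          · exact Or.inr h2
        · exact Or.inl h1
      have hneqμ : h.mu X ≠ h.mu M := by
        intro e
        rcases hmemμ with hc | hc
        · exact ha (hMm (hμMsub (e ▸ hc)))
        · exact hb (hMm (hμMsub (e ▸ hc)))
      have hnot : ¬ h.succ (h.mu M) (h.mu X) := fun hcon =>
        HO_asym h hMK hXK (h.hered M hMK X hXK hMne hXne hcon) hsucc
      have hs : h.succ (h.mu X) (h.mu M) :=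
        (h.total _ hμXK _ hμMK hneqμ).resolve_right hnot
      exact ih (h.mu X) (h.mu M) (by omega) hμXK (hμXsub.trans hXsub)
        (MuChain.step M hch hMne) hs (by omega) hmemμ
    · by_cases haX : a ∈ X
      · have hbX : b ∉ X := fun hb' => hboth ⟨haX, hb'⟩
        have hTm : X.erase a ⊆ m := by
          intro y hy
          rw [mem_erase] at hy
          rcases mem_insert.mp (hXsub hy.2) with rfl | h1
          · exact absurd rfl hy.1
          · rcases mem_insert.mp h1 with rfl | h2
            · exact absurd hy.2 hbX
            · exact h2
        have hTc : (X.erase a).card + 1 = M.card := by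
          rw [card_erase_of_mem haX]
          have := card_pos.mpr hXne; omega
        have hP : h.succ M (insert a (X.erase a)) := lemP h hK ha haK hma hch _ hTm hTc
        rw [insert_erase haX] at hP
        exact HO_asym h hXK hMK hsucc hP
      · have hbX : b ∈ X := hmem.resolve_left haX
        have hTm : X.erase b ⊆ m := by
          intro y hy
          rw [mem_erase] at hy
          rcases mem_insert.mp (hXsub hy.2) with rfl | h1
          · exact absurd hy.2 haX
          · rcases mem_insert.mp h1 with rfl | h2
            · exact absurd rfl hy.1
            · exact h2
        have hTc : (X.erase b).card + 1 = M.card := by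
          rw [card_erase_of_mem hbX]
          have := card_pos.mpr hXne; omega
        have hP : h.succ M (insert b (X.erase b)) := lemP h hK hb hbK hmb hch _ hTm hTc
        rw [insert_erase hbX] at hP
        exact HO_asym h hXK hMK hsucc hP

lemma lemA' {K : Finset (Finset V)} (h : HereditaryOrder K) (hK : IsComplex K)
    {m : Finset V} {a b : V} (ha : a ∉ m) (hb : b ∉ m) (hab : a ≠ b)
    (hπ : insert a (insert b m) ∈ K)
    (hma : h.mu (insert a m) = m) (hmb : h.mu (insert b m) = m) :
    h.mu (insert a (insert b m)) = insert a m ∨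
      h.mu (insert a (insert b m)) = insert b m := by
  have habm : a ∉ insert b m := by
    rw [mem_insert]; push_neg; exact ⟨hab, ha⟩
  have hπcard : (insert a (insert b m)).card = m.card + 2 := by
    rw [card_insert_of_notMem habm, card_insert_of_notMem hb]
  have hπne : (insert a (insert b m)).Nonempty := insert_nonempty _ _
  have hκsub := h.mu_subset _ hπ hπne
  have hκcard := h.mu_card _ hπ hπne
  have hκK : h.mu (insert a (insert b m)) ∈ K := hK.2 _ hπ _ hκsub
  set κ := h.mu (insert a (insert b m)) with hκ
  by_cases haκ : a ∈ κ
  · by_cases hbκ : b ∈ κ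
    · exfalso
      -- both a, b in κ: contradiction via descent
      have hmsub : m ⊆ insert a (insert b m) := (subset_insert b m).trans (subset_insert a _)
      have hmK : m ∈ K := hK.2 _ hπ m hmsub
      have haK : insert a m ∈ K := hK.2 _ hπ _ (insert_subset_insert a (subset_insert b m))
      have hα_sub : insert a m ⊆ insert a (insert b m) :=
        insert_subset_insert a (subset_insert b m)
      have hα_card : (insert a m).card + 1 = (insert a (insert b m)).card := by
        rw [card_insert_of_notMem ha]; omega
      have hα_ne : insert a m ≠ κ := by
        intro e
        rw [← e] at hbκ
        rcases mem_insert.mp hbκ with h1 | h1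
        · exact hab h1.symm
        · exact hb h1
      have hsucc1 : h.succ κ (insert a m) :=
        h.mu_greatest _ hπ hπne _ hα_sub hα_card hα_ne
      have hκne : κ.Nonempty := ⟨a, haκ⟩
      have hμκsub := h.mu_subset κ hκK hκne
      have hμκcard := h.mu_card κ hκK hκne
      have hμκK : h.mu κ ∈ K := hK.2 κ hκK _ hμκsub
      have hmemμ : a ∈ h.mu κ ∨ b ∈ h.mu κ := by
        obtain ⟨w, hw, hXw⟩ := facet_decomp hμκsub hμκcard
        have h1 : a = w ∨ a ∈ h.mu κ := by rw [hXw] at haκ; exact mem_insert.mp haκ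
        have h2 : b = w ∨ b ∈ h.mu κ := by rw [hXw] at hbκ; exact mem_insert.mp hbκ
        rcases h1 with rfl | h1
        · rcases h2 with rfl | h2
          · exact absurd rfl hab
          · exact Or.inr h2
        · exact Or.inl h1
      have hμκne_m : m ≠ h.mu κ := by
        intro e
        rcases hmemμ with hc | hc
        · exact ha (e ▸ hc)
        · exact hb (e ▸ hc)
      have hnot : ¬ h.succ m (h.mu κ) := by
        intro hcon
        have hs2 : h.succ (insert a m) κ := h.hered _ haK κ hκK (insert_nonempty a m) hκne
          (by rwa [hma])
        exact HO_asym h hκK haK hsucc1 hs2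
      have hs : h.succ (h.mu κ) m := (h.total m hmK _ hμκK hμκne_m).resolve_left hnot
      exact descLemma h hK ha hb hab hπ hma hmb (h.mu κ).card (h.mu κ) m le_rfl hμκK
        (hμκsub.trans hκsub) MuChain.refl hs (by omega) hmemμ
    · -- b ∉ κ : κ = insert a m
      left
      have hsub2 : κ ⊆ insert a m := by
        intro y hy
        rcases mem_insert.mp (hκsub hy) with h1 | h1
        · exact mem_insert.mpr (Or.inl h1)
        · rcases mem_insert.mp h1 with h2 | h2
          · exact absurd (h2 ▸ hy) hbκ
          · exact mem_insert_of_mem h2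
      refine eq_of_subset_of_card_le hsub2 ?_
      rw [card_insert_of_notMem ha]; omega
  · -- a ∉ κ : κ = insert b m
    right
    have hsub2 : κ ⊆ insert b m := by
      intro y hy
      rcases mem_insert.mp (hκsub hy) with h1 | h1
      · exact absurd (h1 ▸ hy) haκ
      · exact h1
    refine eq_of_subset_of_card_le hsub2 ?_
    rw [card_insert_of_notMem hb]; omega
lemma propagation {K : Finset (Finset V)} (h : HereditaryOrder K) (hK : IsComplex K)
    (hflag : IsFlag K) {r : ℕ}
    (hyp : ∀ σ ∈ K, ∀ τ ∈ K, σ.card = r + 1 → τ.card = r + 1 →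
      h.mu σ = h.mu τ → σ ∪ τ ∈ K) :
    ∀ n : ℕ, ∀ σ ∈ K, ∀ τ ∈ K, σ.card ≤ n → r + 1 ≤ σ.card → τ.card = σ.card →
      h.mu σ = h.mu τ → σ ∪ τ ∈ K := by
  intro n
  induction n with
  | zero => intro σ _ τ _ hle hge _ _; omega
  | succ n ih =>
    intro σ hσ τ hτ hle hge hcards hμ
    by_cases heq : σ = τ
    · rw [heq, union_self]; exact hτ
    by_cases hbase : σ.card = r + 1
    · exact hyp σ hσ τ hτ hbase (by omega) hμ
    -- now σ.card ≥ r + 2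
    have hσne : σ.Nonempty := card_pos.mp (by omega)
    have hτne : τ.Nonempty := card_pos.mp (by omega)
    have hmσ : h.mu σ ⊆ σ := h.mu_subset σ hσ hσne
    have hmcard : (h.mu σ).card + 1 = σ.card := h.mu_card σ hσ hσne
    obtain ⟨A, hAm, hσA⟩ := facet_decomp hmσ hmcard
    have hmτ : h.mu σ ⊆ τ := hμ ▸ h.mu_subset τ hτ hτne
    have hmcardτ : (h.mu σ).card + 1 = τ.card := by
      rw [hμ]; exact h.mu_card τ hτ hτne
    obtain ⟨B, hBm, hτB⟩ := facet_decomp hmτ hmcardτ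
    have hAB : A ≠ B := by
      intro e; exact heq (by rw [hσA, hτB, e])
    have hmK : h.mu σ ∈ K := hK.2 σ hσ _ hmσ
    have hmne : (h.mu σ).Nonempty := card_pos.mp (by omega)
    have hm'sub : h.mu (h.mu σ) ⊆ h.mu σ := h.mu_subset _ hmK hmne
    have hm'card : (h.mu (h.mu σ)).card + 1 = (h.mu σ).card := h.mu_card _ hmK hmne
    have hμμ : h.mu (h.mu σ) = h.mu (h.mu τ) := by rw [hμ]
    have hAm' : A ∉ h.mu (h.mu σ) := fun hA => hAm (hm'sub hA)
    have hBm' : B ∉ h.mu (h.mu σ) := fun hB => hBm (hm'sub hB)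
    have hηA_sub : insert A (h.mu (h.mu σ)) ⊆ σ := by
      apply insert_subset
      · rw [hσA]; exact mem_insert_self _ _
      · exact hm'sub.trans hmσ
    have hηB_sub : insert B (h.mu (h.mu σ)) ⊆ τ := by
      apply insert_subset
      · rw [hτB]; exact mem_insert_self _ _
      · exact hm'sub.trans hmτ
    have hcardηA : (insert A (h.mu (h.mu σ))).card + 1 = σ.card := by
      rw [card_insert_of_notMem hAm']; omega
    have hcardηB : (insert B (h.mu (h.mu σ))).card + 1 = τ.card := by
      rw [card_insert_of_notMem hBm']; omega
    have hηAne : insert A (h.mu (h.mu σ)) ≠ h.mu σ := by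
      intro e; exact hAm (e ▸ mem_insert_self A _)
    have hηBne : insert B (h.mu (h.mu σ)) ≠ h.mu τ := by
      intro e
      apply hBm
      rw [hμ, ← e]
      exact mem_insert_self B _
    have hμηA : h.mu (insert A (h.mu (h.mu σ))) = h.mu (h.mu σ) :=
      factF h hK hσ (by omega) hηA_sub hcardηA hηAne (subset_insert A _)
    have hμηB : h.mu (insert B (h.mu (h.mu σ))) = h.mu (h.mu σ) := by
      have := factF h hK hτ (by omega) hηB_sub hcardηB hηBne
        (by rw [← hμμ]; exact subset_insert B _)
      rwa [← hμμ] at this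
    have hηAK : insert A (h.mu (h.mu σ)) ∈ K := hK.2 σ hσ _ hηA_sub
    have hηBK : insert B (h.mu (h.mu σ)) ∈ K := hK.2 τ hτ _ hηB_sub
    have hIH : insert A (h.mu (h.mu σ)) ∪ insert B (h.mu (h.mu σ)) ∈ K := by
      apply ih _ hηAK _ hηBK (by omega) (by omega) (by omega)
      rw [hμηA, hμηB]
    have hpair : ({A, B} : Finset V) ∈ K := by
      apply hK.2 _ hIH
      intro x hx
      rcases mem_insert.mp hx with h1 | hx
      · rw [h1]; exact mem_union_left _ (mem_insert_self _ _)
      · rw [mem_singleton] at hx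
        rw [hx]; exact mem_union_right _ (mem_insert_self _ _)
    -- flag condition
    apply hflag (σ ∪ τ)
    · intro u hu
      rcases mem_union.mp hu with h1 | h1
      · exact hK.2 σ hσ {u} (singleton_subset_iff.mpr h1)
      · exact hK.2 τ hτ {u} (singleton_subset_iff.mpr h1)
    · have key : ∀ u ∈ σ, ∀ v ∈ τ, ({u, v} : Finset V) ∈ K := by
        intro u hu v hv
        rw [hσA] at hu; rw [hτB] at hv
        rcases mem_insert.mp hu with rfl | hum
        · rcases mem_insert.mp hv with rfl | hvm
          · exact hpair
          · refine hK.2 σ hσ _ ?_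
            intro x hx
            rcases mem_insert.mp hx with rfl | hx
            · rw [hσA]; exact mem_insert_self x _
            · rw [mem_singleton] at hx; exact hmσ (hx ▸ hvm)
        · rcases mem_insert.mp hv with rfl | hvm
          · refine hK.2 τ hτ _ ?_
            intro x hx
            rcases mem_insert.mp hx with rfl | hx
            · exact hmτ hum
            · rw [mem_singleton] at hx; rw [hx, hτB]; exact mem_insert_self v _
          · refine hK.2 σ hσ _ ?_
            intro x hx
            rcases mem_insert.mp hx with rfl | hx
            · exact hmσ hum
            · rw [mem_singleton] at hx; exact hmσ (hx ▸ hvm)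
      intro u hu v hv huv
      rcases mem_union.mp hu with h1 | h1 <;> rcases mem_union.mp hv with h2 | h2
      · refine hK.2 σ hσ _ ?_
        intro x hx
        rcases mem_insert.mp hx with rfl | hx
        · exact h1
        · rw [mem_singleton] at hx; exact hx ▸ h2
      · exact key u h1 v h2
      · rw [pair_comm]; exact key v h2 u h1
      · refine hK.2 τ hτ _ ?_
        intro x hx
        rcases mem_insert.mp hx with rfl | hx
        · exact h1
        · rw [mem_singleton] at hx; exact hx ▸ h2
lemma main_aux {K : Finset (Finset V)} (h : HereditaryOrder K) (hK : IsComplex K)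
    (hflag : IsFlag K) {r : ℕ} (hr : 0 < r)
    (hyp : ∀ σ ∈ K, ∀ τ ∈ K, σ.card = r + 1 → τ.card = r + 1 →
      h.mu σ = h.mu τ → σ ∪ τ ∈ K) :
    ∀ n : ℕ, ∀ K' : Finset (Finset V), K'.card ≤ n → K' ⊆ K → ∅ ∈ K' →
      (∀ σ ∈ K', ∀ τ ⊆ σ, τ ∈ K') →
      (∀ X ∈ K, X ∉ K' → h.mu X ∉ K' ∨
        ∃ Y ∈ K, Y ∉ K' ∧ h.mu Y = X ∧ Y.card = X.card + 1) →
      ∃ L : Finset (Finset V), CollapsesTo K' L ∧ ∀ σ ∈ L, σ.card ≤ r := by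
  intro n
  induction n with
  | zero =>
    intro K' hle hsub hemp _ _
    have := card_pos.mpr ⟨∅, hemp⟩; omega
  | succ n ih =>
    intro K' hle hsub hemp hdc hd
    by_cases hbig : ∃ σ ∈ K', r < σ.card
    case neg =>
      push_neg at hbig
      exact ⟨K', Relation.ReflTransGen.refl, fun σ hσ => hbig σ hσ⟩
    obtain ⟨σ₀, hσ₀, hσ₀c⟩ := hbig
    obtain ⟨g, hgK', hg⟩ := exists_best h.succ h.trans h.total K' hsub ⟨∅, hemp⟩
    have hgK : g ∈ K := hsub hgK'
    have hgcard : r + 1 ≤ g.card := by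
      by_cases he : σ₀ = g
      · rw [he] at hσ₀c; omega
      · by_contra hlt
        push_neg at hlt
        exact HO_asym h (hsub hσ₀) hgK
          (h.dim_succ σ₀ (hsub hσ₀) g hgK (by omega)) (hg σ₀ hσ₀ he)
    have hgne : g.Nonempty := card_pos.mp (by omega)
    have htsub : h.mu g ⊆ g := h.mu_subset g hgK hgne
    have htcard : (h.mu g).card + 1 = g.card := h.mu_card g hgK hgne
    have htK' : h.mu g ∈ K' := hdc g hgK' _ htsub
    have htK : h.mu g ∈ K := hsub htK'
    have htne : (h.mu g).Nonempty := card_pos.mp (by omega)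
    have htg : h.mu g ≠ g := fun e => by rw [e] at htcard; omega
    have hmax : ∀ ρ ∈ K', g ⊆ ρ → ρ = g := by
      intro ρ hρ hgρ
      by_contra hne
      have hlt : g.card < ρ.card :=
        card_lt_card (Finset.ssubset_iff_subset_ne.mpr ⟨hgρ, fun e => hne e.symm⟩)
      exact HO_asym h (hsub hρ) hgK (h.dim_succ ρ (hsub hρ) g hgK hlt) (hg ρ hρ hne)
    have hfree : ∀ ρ ∈ K', h.mu g ⊆ ρ → ρ = h.mu g ∨ ρ = g := by
      intro ρ hρ htρ
      by_contra hcon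
      push_neg at hcon
      obtain ⟨hρt, hρg⟩ := hcon
      have hρK : ρ ∈ K := hsub hρ
      have hρcard_le : ρ.card ≤ g.card := by
        by_contra hlt; push_neg at hlt
        exact HO_asym h hρK hgK (h.dim_succ ρ hρK g hgK hlt) (hg ρ hρ hρg)
      have hρcard_gt : (h.mu g).card < ρ.card :=
        card_lt_card (Finset.ssubset_iff_subset_ne.mpr ⟨htρ, fun e => hρt e.symm⟩)
      have hρcard : ρ.card = g.card := by omega
      have hρne : ρ.Nonempty := card_pos.mp (by omega)
      have hμρ : h.mu ρ = h.mu g := by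
        by_contra hne2
        have hgr : h.succ (h.mu ρ) (h.mu g) :=
          h.mu_greatest ρ hρK hρne _ htρ (by omega) (fun e => hne2 e.symm)
        exact HO_asym h hρK hgK (h.hered ρ hρK g hgK hρne hgne hgr) (hg ρ hρ hρg)
      obtain ⟨a, haT, hga⟩ := facet_decomp htsub htcard
      obtain ⟨b, hbT, hρb⟩ := facet_decomp htρ (by omega)
      have hab : a ≠ b := fun e => hρg (by rw [hρb, ← e, ← hga])
      have hUK : g ∪ ρ ∈ K :=
        propagation h hK hflag hyp g.card g hgK ρ hρK le_rfl hgcard hρcard hμρ.symm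
      have hUeq : g ∪ ρ = insert a (insert b (h.mu g)) := by
        have h2 : insert a (h.mu g) ∪ insert b (h.mu g) = insert a (insert b (h.mu g)) := by
          ext x; simp only [mem_union, mem_insert]; tauto
        rw [← h2, ← hga, ← hρb]
      have hwK : insert a (insert b (h.mu g)) ∈ K := hUeq ▸ hUK
      have hUcard : (insert a (insert b (h.mu g))).card = g.card + 1 := by
        have hanb : a ∉ insert b (h.mu g) := by
          rw [mem_insert]; push_neg; exact ⟨hab, haT⟩
        rw [card_insert_of_notMem hanb, card_insert_of_notMem hbT]; omega
      have hA' := lemA' h hK haT hbT hab hwK (by rw [← hga]) (by rw [← hρb]; exact hμρ)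
      rcases hA' with hμu | hμu
      · -- h.mu w = g : minimal counterexample descent
        have hμwg : h.mu (insert a (insert b (h.mu g))) = g := by rw [hμu, ← hga]
        classical
        set BAD := K.filter (fun X => g ⊆ X ∧ X.card = g.card + 1 ∧ h.mu X = g) with hBAD
        have hUBAD : insert a (insert b (h.mu g)) ∈ BAD := by
          refine mem_filter.mpr ⟨hwK, ?_, hUcard, hμwg⟩
          rw [← hUeq]; exact subset_union_left
        obtain ⟨X₀, hX₀B, hX₀min⟩ := exists_best (fun x y => h.succ y x)
          (fun x hx y hy z hz h1 h2 => h.trans z hz y hy x hx h2 h1)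
          (fun x hx y hy hne => (h.total x hx y hy hne).symm)
          BAD (filter_subset _ _) ⟨_, hUBAD⟩
        obtain ⟨hX₀K, hX₀g, hX₀c, hX₀mu⟩ := mem_filter.mp hX₀B
        have hX₀ne_g : X₀ ≠ g := fun e => by rw [e] at hX₀c; omega
        have hX₀K' : X₀ ∉ K' := by
          intro hmem
          exact HO_asym h (hsub hmem) hgK
            (h.dim_succ X₀ (hsub hmem) g hgK (by omega)) (hg X₀ hmem hX₀ne_g)
        rcases hd X₀ hX₀K hX₀K' with h1 | ⟨Y, hYK, hYK', hμY, hYc⟩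
        · exact h1 (by rw [hX₀mu]; exact hgK')
        · have hYne : Y.Nonempty := card_pos.mp (by omega)
          have hX₀subY : X₀ ⊆ Y := hμY ▸ h.mu_subset Y hYK hYne
          obtain ⟨v, hvX₀, hYv⟩ := facet_decomp hX₀subY (by omega)
          have hvg : v ∉ g := fun hm => hvX₀ (hX₀g hm)
          have hX''sub : insert v g ⊆ Y :=
            insert_subset (by rw [hYv]; exact mem_insert_self _ _) (hX₀g.trans hX₀subY)
          have hX''card : (insert v g).card = g.card + 1 := card_insert_of_notMem hvg
          have hX''K : insert v g ∈ K := hK.2 Y hYK _ hX''sub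
          have hX''ne : insert v g ≠ X₀ := fun e => hvX₀ (e ▸ mem_insert_self v g)
          have hμX'' : h.mu (insert v g) = g := by
            have hf := factF h hK hYK (by omega) hX''sub (by omega)
              (by rw [hμY]; exact hX''ne) (by rw [hμY, hX₀mu]; exact subset_insert v g)
            rwa [hμY, hX₀mu] at hf
          have hX''BAD : insert v g ∈ BAD :=
            mem_filter.mpr ⟨hX''K, subset_insert v g, hX''card, hμX''⟩
          have h1 : h.succ X₀ (insert v g) := by
            have hf := h.mu_greatest Y hYK hYne (insert v g) hX''sub (by omega)
              (by rw [hμY]; exact hX''ne)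
            rwa [hμY] at hf
          exact HO_asym h hX₀K hX''K h1 (hX₀min _ hX''BAD hX''ne)
      · -- h.mu w = ρ
        have hwne : (insert a (insert b (h.mu g))).Nonempty := insert_nonempty _ _
        have hgsubw : g ⊆ insert a (insert b (h.mu g)) := by
          rw [← hUeq]; exact subset_union_left
        have hgne_w : g ≠ h.mu (insert a (insert b (h.mu g))) := by
          rw [hμu]
          intro e
          exact hρg (hρb.trans e.symm)
        have hsucc1 : h.succ (h.mu (insert a (insert b (h.mu g)))) g :=
          h.mu_greatest _ hwK hwne g hgsubw (by omega) hgne_w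
        rw [hμu, ← hρb] at hsucc1
        exact HO_asym h hρK hgK hsucc1 (hg ρ hρ hρg)
    -- build the collapse step
    have hpair : IsFreePair K' g (h.mu g) := ⟨hgK', htK', htne, htsub, htcard, hmax, hfree⟩
    have hmem'' : ∀ {x : Finset V},
        x ∈ (K'.erase g).erase (h.mu g) ↔ x ≠ h.mu g ∧ x ≠ g ∧ x ∈ K' := by
      intro x; rw [mem_erase, mem_erase]
    have hK''sub : (K'.erase g).erase (h.mu g) ⊆ K' :=
      (erase_subset _ _).trans (erase_subset _ _)
    have hgK'' : g ∉ (K'.erase g).erase (h.mu g) := fun hm => (hmem''.mp hm).2.1 rfl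
    have htK'' : h.mu g ∉ (K'.erase g).erase (h.mu g) := notMem_erase _ _
    have ht_in : h.mu g ∈ K'.erase g := mem_erase.mpr ⟨htg, htK'⟩
    have hc1 : (K'.erase g).card < K'.card := card_erase_lt_of_mem hgK'
    have hc2 : ((K'.erase g).erase (h.mu g)).card < (K'.erase g).card :=
      card_erase_lt_of_mem ht_in
    have hemp'' : ∅ ∈ (K'.erase g).erase (h.mu g) :=
      hmem''.mpr ⟨fun e => htne.ne_empty e.symm, fun e => hgne.ne_empty e.symm, hemp⟩
    have hdc'' : ∀ σ ∈ (K'.erase g).erase (h.mu g), ∀ τ ⊆ σ,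
        τ ∈ (K'.erase g).erase (h.mu g) := by
      intro σ hσ τ hτs
      obtain ⟨hσt, hσg, hσK'⟩ := hmem''.mp hσ
      have hτK' : τ ∈ K' := hdc σ hσK' τ hτs
      refine hmem''.mpr ⟨?_, ?_, hτK'⟩
      · intro e
        rw [e] at hτs
        rcases hfree σ hσK' hτs with h1 | h1
        · exact hσt h1
        · exact hσg h1
      · intro e
        rw [e] at hτs
        exact hσg (hmax σ hσK' hτs)
    have hd'' : ∀ X ∈ K, X ∉ (K'.erase g).erase (h.mu g) →
        h.mu X ∉ (K'.erase g).erase (h.mu g) ∨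
        ∃ Y ∈ K, Y ∉ (K'.erase g).erase (h.mu g) ∧ h.mu Y = X ∧ Y.card = X.card + 1 := by
      intro X hXK hX''
      by_cases hXK' : X ∈ K'
      · have hXcases : X = h.mu g ∨ X = g := by
          by_contra hc; push_neg at hc
          exact hX'' (hmem''.mpr ⟨hc.1, hc.2, hXK'⟩)
        rcases hXcases with rfl | rfl
        · exact Or.inr ⟨g, hgK, hgK'', rfl, by omega⟩
        · exact Or.inl htK''
      · rcases hd X hXK hXK' with h1 | ⟨Y, hY1, hY2, hY3, hY4⟩
        · exact Or.inl (fun hm => h1 (hK''sub hm))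
        · exact Or.inr ⟨Y, hY1, fun hm => hY2 (hK''sub hm), hY3, hY4⟩
    obtain ⟨L, hL1, hL2⟩ := ih ((K'.erase g).erase (h.mu g)) (by omega)
      (hK''sub.trans hsub) hemp'' hdc'' hd''
    exact ⟨L, Relation.ReflTransGen.head ⟨g, h.mu g, hpair, rfl⟩ hL1, hL2⟩

/-- **Proposition `propos_sigma_tau`.**
Let `K` be a finite flag simplicial complex, let `≻` be a hereditary ordering of `K`, and
let `r` be a positive integer.  Suppose that for any two simplices `σ, τ ∈ K` with
`dim σ = dim τ = r` (i.e. `σ.card = τ.card = r + 1`) and `μ(σ) = μ(τ)` one has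
`σ ∪ τ ∈ K`.  Then `K` collapses on a subcomplex of dimension less than `r`. -/
theorem flag_hereditary_collapses
    (K : Finset (Finset V)) (hK : IsComplex K) (hflag : IsFlag K)
    (h : HereditaryOrder K) (r : ℕ) (hr : 0 < r)
    (hyp : ∀ σ ∈ K, ∀ τ ∈ K, σ.card = r + 1 → τ.card = r + 1 →
      h.mu σ = h.mu τ → σ ∪ τ ∈ K) :
    ∃ L : Finset (Finset V), CollapsesTo K L ∧ ∀ σ ∈ L, σ.card ≤ r := by
  exact main_aux h hK hflag hr hyp K.card K le_rfl subset_rfl hK.1 hK.2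
    (fun X hX hX' => absurd hX hX')
end

section
/- Let K be a finite simplicial complex with a hereditary ordering ≻. Suppose σ and τ are simplices of K such that μ(σ) = μ(τ), σ ≻ τ, and σ ∪ τ ∈ K. Then μ(σ ∪ τ) = σ. -/
open Finset

variable {V : Type*} [DecidableEq V]

/-- iterated mu facts -/
lemma iterFacts (K : Finset (Finset V)) (hK : IsComplex K) (h : HereditaryOrder K) : ∀ j : ℕ, ∀ s : Finset V, s ∈ K → j ≤ s.card →
    h.mu^[j] s ∈ K ∧ h.mu^[j] s ⊆ s ∧ (h.mu^[j] s).card + j = s.card := by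
  intro j
  induction j with
  | zero => intro s hs _; simpa using hs
  | succ j ih =>
    intro s hs hj
    obtain ⟨hmem, hsub, hcard⟩ := ih s hs (Nat.le_of_succ_le hj)
    have hne : (h.mu^[j] s).Nonempty := by
      rw [← Finset.card_pos]; omega
    have h1 := h.mu_subset _ hmem hne
    have h2 := h.mu_card _ hmem hne
    rw [Function.iterate_succ_apply']
    exact ⟨hK.2 _ hmem _ h1, h1.trans hsub, by omega⟩

/-- succ is preserved (weakly) by mu -/
lemma succ_mu (K : Finset (Finset V)) (hK : IsComplex K) (h : HereditaryOrder K) : ∀ A ∈ K, ∀ B ∈ K, A.Nonempty → B.Nonempty → h.succ A B →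
    h.mu A = h.mu B ∨ h.succ (h.mu A) (h.mu B) := by
  intro A hA B hB hAne hBne hs
  by_cases he : h.mu A = h.mu B
  · exact Or.inl he
  have hmA : h.mu A ∈ K := hK.2 _ hA _ (h.mu_subset _ hA hAne)
  have hmB : h.mu B ∈ K := hK.2 _ hB _ (h.mu_subset _ hB hBne)
  rcases h.total _ hmA _ hmB he with h1 | h1
  · exact Or.inr h1
  · exact absurd (h.trans _ hA _ hB _ hA hs (h.hered _ hB _ hA hBne hAne h1)) (h.irrefl _ hA)

lemma succ_mu_iter (K : Finset (Finset V)) (hK : IsComplex K) (h : HereditaryOrder K) : ∀ i : ℕ, ∀ A ∈ K, ∀ B ∈ K, i ≤ A.card → i ≤ B.card → h.succ A B →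
    h.mu^[i] A = h.mu^[i] B ∨ h.succ (h.mu^[i] A) (h.mu^[i] B) := by
  intro i
  induction i with
  | zero => intro A _ B _ _ _ hs; exact Or.inr (by simpa using hs)
  | succ i ih =>
    intro A hA B hB hiA hiB hs
    obtain ⟨hAm, _, hAc⟩ := iterFacts K hK h i A hA (by omega)
    obtain ⟨hBm, _, hBc⟩ := iterFacts K hK h i B hB (by omega)
    rcases ih A hA B hB (by omega) (by omega) hs with he | hs'
    · rw [Function.iterate_succ_apply', Function.iterate_succ_apply', he]; exact Or.inl rfl
    · have hAne : (h.mu^[i] A).Nonempty := by rw [← Finset.card_pos]; omega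
      have hBne : (h.mu^[i] B).Nonempty := by rw [← Finset.card_pos]; omega
      rw [Function.iterate_succ_apply', Function.iterate_succ_apply']
      exact succ_mu K hK h _ hAm _ hBm hAne hBne hs'

/-- mu^[j] s beats every other codim-j subset of s -/
lemma lemA (K : Finset (Finset V)) (hK : IsComplex K) (h : HereditaryOrder K) : ∀ i : ℕ, ∀ s : Finset V, ∀ t : Finset V, s ∈ K → t ⊆ s →
    t.card + (i + 1) = s.card → t ≠ h.mu^[i+1] s → h.succ (h.mu^[i+1] s) t := by
  intro i
  induction i with
  | zero =>
    intro s t hs hts hc hne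
    have hsne : s.Nonempty := by rw [← Finset.card_pos]; omega
    simpa using h.mu_greatest s hs hsne t hts (by omega) (by simpa using hne)
  | succ i ih =>
    intro s t hs hts hc hne
    have hsne : s.Nonempty := by rw [← Finset.card_pos]; omega
    have hlt : t.card < s.card := by omega
    have hss : t ⊂ s := HasSubset.Subset.ssubset_of_ne hts (fun he => by rw [he] at hc; omega)
    obtain ⟨w, hws, hwt⟩ := Finset.exists_of_ssubset hss
    set f := s.erase w with hfdef
    have hfs : f ⊆ s := Finset.erase_subset _ _
    have hfK : f ∈ K := hK.2 _ hs _ hfs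
    have htf : t ⊆ f := Finset.subset_erase.mpr ⟨hts, hwt⟩
    have hfc : f.card + 1 = s.card := Finset.card_erase_add_one hws
    have hmuK : h.mu s ∈ K := hK.2 _ hs _ (h.mu_subset _ hs hsne)
    have hmuc := h.mu_card _ hs hsne
    by_cases hf : f = h.mu s
    · rw [Function.iterate_succ_apply]
      exact ih (h.mu s) t hmuK (hf ▸ htf) (by omega)
        (by rwa [← Function.iterate_succ_apply])
    · have hmg : h.succ (h.mu s) f := h.mu_greatest s hs hsne f hfs hfc hf
      have hB := succ_mu_iter K hK h (i+1) _ hmuK _ hfK (by omega) (by omega) hmg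
      rw [← Function.iterate_succ_apply] at hB
      by_cases ht : t = h.mu^[i+1] f
      · rcases hB with he | hs'
        · exact absurd (he.trans ht.symm).symm hne
        · rwa [← ht] at hs'
      · have hih := ih f t hfK htf (by omega) ht
        rcases hB with he | hs'
        · rwa [he]
        · obtain ⟨hm1, _, _⟩ := iterFacts K hK h (i+2) s hs (by omega)
          obtain ⟨hm2, _, _⟩ := iterFacts K hK h (i+1) f hfK (by omega)
          exact h.trans _ hm1 _ hm2 _ (hK.2 _ hs _ hts) hs' hih

/-- **Lemma `lem_sigma_cup_tau`.**
Let `K` be a finite simplicial complex with a hereditary ordering `≻`.  Suppose `σ` and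
`τ` are simplices of `K` such that `μ(σ) = μ(τ)`, `σ ≻ τ`, and `σ ∪ τ ∈ K`.  Then
`μ(σ ∪ τ) = σ`. -/
theorem mu_union_eq
    (K : Finset (Finset V)) (hK : IsComplex K) (h : HereditaryOrder K)
    (σ τ : Finset V) (hσ : σ ∈ K) (hτ : τ ∈ K)
    (hσne : σ.Nonempty) (hτne : τ.Nonempty)
    (hmu : h.mu σ = h.mu τ) (hsucc : h.succ σ τ) (hunion : σ ∪ τ ∈ K) :
    h.mu (σ ∪ τ) = σ := by
  set m := h.mu σ with hm
  have hmsubσ : m ⊆ σ := h.mu_subset σ hσ hσne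
  have hmsubτ : m ⊆ τ := hmu ▸ h.mu_subset τ hτ hτne
  have hcσ : m.card + 1 = σ.card := h.mu_card σ hσ hσne
  have hcτ : m.card + 1 = τ.card := hmu ▸ h.mu_card τ hτ hτne
  have hmK : m ∈ K := hK.2 _ hσ _ hmsubσ
  have hστ : σ ≠ τ := fun he => absurd (he ▸ hsucc) (he ▸ h.irrefl σ hσ)
  have hsd : (σ \ m).card = 1 := by rw [card_sdiff_of_subset hmsubσ]; omega
  obtain ⟨a, ha⟩ := card_eq_one.mp hsd
  have haσ : a ∈ σ := (mem_sdiff.mp (ha ▸ mem_singleton_self a)).1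
  have ham : a ∉ m := (mem_sdiff.mp (ha ▸ mem_singleton_self a)).2
  have hσeq : σ = insert a m := by
    ext v
    simp only [mem_insert]
    constructor
    · intro hv
      by_cases hvm : v ∈ m
      · exact Or.inr hvm
      · exact Or.inl (mem_singleton.mp (ha ▸ mem_sdiff.mpr ⟨hv, hvm⟩))
    · rintro (rfl | hv)
      · exact haσ
      · exact hmsubσ hv
  have hsd' : (τ \ m).card = 1 := by rw [card_sdiff_of_subset hmsubτ]; omega
  obtain ⟨b, hb⟩ := card_eq_one.mp hsd'
  have hbτ : b ∈ τ := (mem_sdiff.mp (hb ▸ mem_singleton_self b)).1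
  have hbm : b ∉ m := (mem_sdiff.mp (hb ▸ mem_singleton_self b)).2
  have hτeq : τ = insert b m := by
    ext v
    simp only [mem_insert]
    constructor
    · intro hv
      by_cases hvm : v ∈ m
      · exact Or.inr hvm
      · exact Or.inl (mem_singleton.mp (hb ▸ mem_sdiff.mpr ⟨hv, hvm⟩))
    · rintro (rfl | hv)
      · exact hbτ
      · exact hmsubτ hv
  have hab : a ≠ b := by
    rintro rfl
    exact hστ (by rw [hσeq, hτeq])
  have hu : σ ∪ τ = insert a (insert b m) := by
    rw [hσeq, hτeq]
    ext v
    simp only [mem_union, mem_insert]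
    tauto
  have hcu : (σ ∪ τ).card = m.card + 2 := by
    rw [hu, card_insert_of_notMem (by simp [hab, ham]), card_insert_of_notMem hbm]
  have hune : (σ ∪ τ).Nonempty := by rw [← card_pos]; omega
  have hρsub : h.mu (σ ∪ τ) ⊆ σ ∪ τ := h.mu_subset _ hunion hune
  have hρK : h.mu (σ ∪ τ) ∈ K := hK.2 _ hunion _ hρsub
  have hρc : (h.mu (σ ∪ τ)).card + 1 = (σ ∪ τ).card := h.mu_card _ hunion hune
  by_contra hne
  have hρσ : h.succ (h.mu (σ ∪ τ)) σ :=
    h.mu_greatest (σ ∪ τ) hunion hune σ subset_union_left (by omega)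
      (fun he => hne he.symm)
  have hρne : (h.mu (σ ∪ τ)).Nonempty := by rw [← card_pos]; omega
  -- the key descent claim
  have D : ∀ c : ℕ, ∀ κ : Finset V, κ.card = c → κ ⊆ σ ∪ τ → ∀ n : ℕ,
      κ.card + n = m.card → h.succ κ (h.mu^[n] m) → False := by
    intro c
    induction c using Nat.strong_induction_on with
    | _ c ih =>
      intro κ hcc hκsub n hcard hs
      have hκK : κ ∈ K := hK.2 _ hunion _ hκsub
      obtain ⟨hmnK, hmnsub, hmnc⟩ := iterFacts K hK h n m hmK (by omega)
      by_cases hbκ : b ∈ κ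
      · by_cases haκ : a ∈ κ
        · -- both a and b in κ : descend
          have hab2 : 1 < κ.card := Finset.one_lt_card.mpr ⟨a, haκ, b, hbκ, hab⟩
          have hκne : κ.Nonempty := by rw [← card_pos]; omega
          have hmnne : (h.mu^[n] m).Nonempty := by rw [← card_pos]; omega
          have hμκsub : h.mu κ ⊆ κ := h.mu_subset _ hκK hκne
          have hμκc : (h.mu κ).card + 1 = κ.card := h.mu_card _ hκK hκne
          have habμ : a ∈ h.mu κ ∨ b ∈ h.mu κ := by
            by_contra hcon
            push_neg at hcon
            have hsub2 : h.mu κ ⊆ (κ.erase a).erase b :=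
              subset_erase.mpr ⟨subset_erase.mpr ⟨hμκsub, hcon.1⟩, hcon.2⟩
            have hc2 : ((κ.erase a).erase b).card = κ.card - 2 := by
              rw [card_erase_of_mem (mem_erase.mpr ⟨(Ne.symm hab), hbκ⟩),
                card_erase_of_mem haκ]
              omega
            have := card_le_card hsub2
            omega
          rcases succ_mu K hK h κ hκK _ hmnK hκne hmnne hs with he | hs'
          · -- equality impossible: mu κ would be inside m
            have : h.mu (h.mu^[n] m) ⊆ m :=
              (h.mu_subset _ hmnK hmnne).trans hmnsub
            rw [← he] at this
            rcases habμ with h1 | h1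
            · exact ham (this h1)
            · exact hbm (this h1)
          · rw [show h.mu (h.mu^[n] m) = h.mu^[n+1] m from
              (Function.iterate_succ_apply' h.mu n m).symm] at hs'
            exact ih (c - 1) (by omega) (h.mu κ) (by omega)
              (hμκsub.trans hκsub) (n + 1) (by omega) hs'
        · -- a ∉ κ : κ ⊆ τ, contradiction with lemA
          have hκτ : κ ⊆ τ := by
            intro v hv
            rcases mem_union.mp (hκsub hv) with h1 | h1
            · rw [hσeq] at h1
              rcases mem_insert.mp h1 with rfl | h2
              · exact absurd hv haκ
              · exact hmsubτ h2
            · exact h1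
          have hiter : h.mu^[n+1] τ = h.mu^[n] m := by
            rw [Function.iterate_succ_apply, ← hmu]
          have hκne' : κ ≠ h.mu^[n+1] τ := by
            rw [hiter]
            rintro rfl
            exact h.irrefl _ hκK hs
          have hA := lemA K hK h n τ κ hτ hκτ (by omega) hκne'
          rw [hiter] at hA
          exact h.irrefl _ hκK (h.trans _ hκK _ hmnK _ hκK hs hA)
      · -- b ∉ κ : κ ⊆ σ, contradiction with lemA
        have hκσ : κ ⊆ σ := by
          intro v hv
          rcases mem_union.mp (hκsub hv) with h1 | h1
          · exact h1
          · rw [hτeq] at h1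
            rcases mem_insert.mp h1 with rfl | h2
            · exact absurd hv hbκ
            · exact hmsubσ h2
        have hiter : h.mu^[n+1] σ = h.mu^[n] m := by
          rw [Function.iterate_succ_apply, ← hm]
        have hκne' : κ ≠ h.mu^[n+1] σ := by
          rw [hiter]
          rintro rfl
          exact h.irrefl _ hκK hs
        have hA := lemA K hK h n σ κ hσ hκσ (by omega) hκne'
        rw [hiter] at hA
        exact h.irrefl _ hκK (h.trans _ hκK _ hmnK _ hκK hs hA)
  -- from ρ ≻ σ obtain μ(ρ) ≻ m and start the descent
  have hρτ : h.mu (σ ∪ τ) ≠ τ := by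
    intro he
    exact h.irrefl σ hσ (h.trans σ hσ τ hτ σ hσ hsucc (he ▸ hρσ))
  have hκm : h.succ (h.mu (h.mu (σ ∪ τ))) m := by
    rcases succ_mu K hK h _ hρK σ hσ hρne hσne hρσ with he | hs'
    · -- μ(ρ) = m forces ρ = σ or ρ = τ
      exfalso
      rw [← hm] at he
      have hmρ : m ⊆ h.mu (σ ∪ τ) := he ▸ h.mu_subset _ hρK hρne
      have hsd2 : (h.mu (σ ∪ τ) \ m).card = 1 := by rw [card_sdiff_of_subset hmρ]; omega
      obtain ⟨c, hc⟩ := card_eq_one.mp hsd2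
      have hcρ : c ∈ h.mu (σ ∪ τ) := (mem_sdiff.mp (hc ▸ mem_singleton_self c)).1
      have hcm : c ∉ m := (mem_sdiff.mp (hc ▸ mem_singleton_self c)).2
      have hρeq : h.mu (σ ∪ τ) = insert c m := by
        ext v
        simp only [mem_insert]
        constructor
        · intro hv
          by_cases hvm : v ∈ m
          · exact Or.inr hvm
          · exact Or.inl (mem_singleton.mp (hc ▸ mem_sdiff.mpr ⟨hv, hvm⟩))
        · rintro (rfl | hv)
          · exact hcρ
          · exact hmρ hv
      have hcu2 : c ∈ σ ∪ τ := hρsub hcρ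
      rw [hu] at hcu2
      rcases mem_insert.mp hcu2 with rfl | hc2
      · exact hne (by rw [hρeq, hσeq])
      · rcases mem_insert.mp hc2 with rfl | hc3
        · exact hρτ (by rw [hρeq, hτeq])
        · exact hcm hc3
    · exact hs'
  exact D (h.mu (h.mu (σ ∪ τ))).card (h.mu (h.mu (σ ∪ τ))) rfl
    ((h.mu_subset _ hρK hρne).trans hρsub) 0
    (by have := h.mu_card _ hρK hρne; omega) (by simpa using hκm)
end

section
/- Let K be a finite simplicial complex with a hereditary ordering ≻, and let M(K) be the set of all simplices σ ∈ K such that σ = μ(η) for some η ∈ K. If σ ∈ M(K), then μ(λ(σ)) = σ and λ(σ) ∉ M(K), where λ(σ) denotes the smallest, with respect to ≻, simplex of K of dimension dim σ + 1 containing σ. -/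
open Finset

variable {V : Type*} [DecidableEq V]

/-- **Lemma `lem_lambda`.**
Let `K` be a finite simplicial complex with a hereditary ordering `≻`, and let
`M(K) = {σ ∈ K | σ = μ(η) for some η ∈ K}`.  If `σ ∈ M(K)` and `lam = λ(σ)` is the
smallest (with respect to `≻`) simplex of `K` of dimension `dim σ + 1` containing `σ`,
then `μ(λ(σ)) = σ` and `λ(σ) ∉ M(K)`. -/
theorem mu_lambda_eq_and_lambda_not_mem
    (K : Finset (Finset V)) (hK : IsComplex K) (h : HereditaryOrder K)
    (σ lam : Finset V) (hσ : σ ∈ K)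
    (hM : ∃ η ∈ K, η.Nonempty ∧ h.mu η = σ)
    (hlam : lam ∈ K) (hsub : σ ⊆ lam) (hcard : lam.card = σ.card + 1)
    (hmin : ∀ ρ ∈ K, σ ⊆ ρ → ρ.card = σ.card + 1 → ρ ≠ lam → h.succ ρ lam) :
    h.mu lam = σ ∧ ¬ ∃ η ∈ K, η.Nonempty ∧ h.mu η = lam := by

  obtain ⟨η, hη, hηne, hμη⟩ := hM
  have hlamne : lam.Nonempty := Finset.card_pos.mp (by omega)
  -- Part 1: mu lam = σ
  have part1 : h.mu lam = σ := by
    by_contra hne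
    -- σ is a facet of lam distinct from mu lam, so mu lam ≻ σ
    have h1 : h.succ (h.mu lam) σ :=
      h.mu_greatest lam hlam hlamne σ hsub (by omega) (fun e => hne e.symm)
    have hησ : σ ⊆ η := hμη ▸ h.mu_subset η hη hηne
    have hηcard : η.card = σ.card + 1 := by
      have := h.mu_card η hη hηne; rw [hμη] at this; omega
    have hηlam : η ≠ lam := by
      intro e; exact hne (e ▸ hμη)
    have h2 : h.succ η lam := hmin η hη hησ hηcard hηlam
    have h3 : h.succ lam η := h.hered lam hlam η hη hlamne hηne (hμη ▸ h1)
    exact h.irrefl η hη (h.trans η hη lam hlam η hη h2 h3)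
  refine ⟨part1, ?_⟩
  -- Part 2: lam ∉ M(K)
  rintro ⟨ζ, hζ, hζne, hμζ⟩
  have hlamζ : lam ⊆ ζ := hμζ ▸ h.mu_subset ζ hζ hζne
  have hζcard : ζ.card = lam.card + 1 := by
    have := h.mu_card ζ hζ hζne; rw [hμζ] at this; omega
  -- pick y ∈ lam \ σ
  obtain ⟨y, hy⟩ : (lam \ σ).Nonempty := by
    rw [← Finset.card_pos, Finset.card_sdiff_of_subset hsub]; omega
  rw [Finset.mem_sdiff] at hy
  -- pick x ∈ ζ \ lam
  obtain ⟨x, hx⟩ : (ζ \ lam).Nonempty := by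
    rw [← Finset.card_pos, Finset.card_sdiff_of_subset hlamζ]; omega
  rw [Finset.mem_sdiff] at hx
  set ρ := ζ.erase y with hρdef
  have hρsub : ρ ⊆ ζ := Finset.erase_subset y ζ
  have hρK : ρ ∈ K := hK.2 ζ hζ ρ hρsub
  have hyζ : y ∈ ζ := hlamζ hy.1
  have hρcard : ρ.card = σ.card + 1 := by
    rw [hρdef, Finset.card_erase_of_mem hyζ]; omega
  have hσρ : σ ⊆ ρ := fun v hv =>
    Finset.mem_erase.mpr ⟨fun e => hy.2 (e ▸ hv), hlamζ (hsub hv)⟩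
  have hρlam : ρ ≠ lam := by
    intro e
    have hxρ : x ∈ ρ := Finset.mem_erase.mpr ⟨fun e' => hx.2 (e' ▸ hy.1), hx.1⟩
    exact hx.2 (e ▸ hxρ)
  have h4 : h.succ ρ lam := hmin ρ hρK hσρ hρcard hρlam
  have h5 : h.succ lam ρ := by
    have := h.mu_greatest ζ hζ hζne ρ hρsub (by omega) (by rw [hμζ]; exact hρlam)
    rwa [hμζ] at this
  exact h.irrefl ρ hρK (h.trans ρ hρK lam hlam ρ hρK h4 h5)
end

section
/- Let K be a finite flag simplicial complex with a hereditary ordering ≻, and let r be a positive integer. Suppose that for any two simplices σ, τ ∈ K with dim σ = dim τ = r and μ(σ) = μ(τ), one has σ ∪ τ ∈ K. Then for any two simplices σ, τ ∈ K with dim σ = dim τ > r and μ(σ) = μ(τ), one also has σ ∪ τ ∈ K. -/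
open Finset

variable {V : Type*} [DecidableEq V]

/-- Key step: if `σ = {a} ∪ μ(σ)` with `a ∉ μ(σ)` and `σ` has at least two vertices,
then the largest facet of `{a} ∪ μ(μ(σ))` is `μ(μ(σ))`. -/
lemma mu_step (K : Finset (Finset V)) (hK : IsComplex K) (h : HereditaryOrder K)
    {σ : Finset V} (hσK : σ ∈ K) (h2 : 2 ≤ σ.card)
    {a : V} (ha : a ∉ h.mu σ) (hσ : σ = insert a (h.mu σ)) :
    h.mu (insert a (h.mu (h.mu σ))) = h.mu (h.mu σ) := by
  set μ := h.mu σ with hμdef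
  have hσne : σ.Nonempty := Finset.card_pos.mp (by omega)
  have hμs : μ ⊆ σ := h.mu_subset σ hσK hσne
  have hμK : μ ∈ K := hK.2 σ hσK μ hμs
  have hμcard : μ.card + 1 = σ.card := h.mu_card σ hσK hσne
  have hμne : μ.Nonempty := Finset.card_pos.mp (by omega)
  set ν := h.mu μ with hνdef
  have hνs : ν ⊆ μ := h.mu_subset μ hμK hμne
  have hνK : ν ∈ K := hK.2 μ hμK ν hνs
  have hνcard : ν.card + 1 = μ.card := h.mu_card μ hμK hμne
  have haν : a ∉ ν := fun hx => ha (hνs hx)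
  have haσ : a ∈ σ := by rw [hσ]; exact Finset.mem_insert_self a μ
  set σ' := insert a ν with hσ'def
  have hσ's : σ' ⊆ σ := by
    intro x hx
    rcases Finset.mem_insert.mp hx with rfl | hx
    · exact haσ
    · exact hμs (hνs hx)
  have hσ'K : σ' ∈ K := hK.2 σ hσK σ' hσ's
  have hσ'card : σ'.card = ν.card + 1 := Finset.card_insert_of_notMem haν
  have hσ'ne : σ'.Nonempty := ⟨a, Finset.mem_insert_self a ν⟩
  -- suppose the largest facet of σ' is not ν
  by_contra hne
  have hνfacet : ν ⊆ σ' := Finset.subset_insert a ν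
  have hνcard' : ν.card + 1 = σ'.card := hσ'card.symm
  -- then μ(σ') ≻ ν
  have h1 : h.succ (h.mu σ') ν :=
    h.mu_greatest σ' hσ'K hσ'ne ν hνfacet hνcard' (fun hh => hne hh.symm)
  set ρ := h.mu σ' with hρdef
  have hρs : ρ ⊆ σ' := h.mu_subset σ' hσ'K hσ'ne
  have hρK : ρ ∈ K := hK.2 σ' hσ'K ρ hρs
  have hρcard : ρ.card + 1 = σ'.card := h.mu_card σ' hσ'K hσ'ne
  -- ρ contains a, and there is x ∈ ν \ ρ
  have hcardρν : ρ.card = ν.card := by omega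
  have hνnρ : ¬ ν ⊆ ρ := by
    intro hsub
    have : ν = ρ := Finset.eq_of_subset_of_card_le hsub (le_of_eq hcardρν)
    exact hne this.symm
  obtain ⟨x, hxν, hxρ⟩ := Finset.not_subset.mp hνnρ
  have haρ : a ∈ ρ := by
    by_contra haρ
    have : ρ ⊆ ν := fun y hy => by
      rcases Finset.mem_insert.mp (hρs hy) with rfl | hy'
      · exact absurd hy haρ
      · exact hy'
    exact hne (Finset.eq_of_subset_of_card_le this (le_of_eq hcardρν.symm))
  have hxμ : x ∈ μ := hνs hxν
  have hxa : x ≠ a := fun hh => ha (hh ▸ hxμ)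
  set ρ' := insert a (μ.erase x) with hρ'def
  have hρ's : ρ' ⊆ σ := by
    intro y hy
    rcases Finset.mem_insert.mp hy with rfl | hy
    · exact haσ
    · exact hμs (Finset.mem_of_mem_erase hy)
  have hρ'K : ρ' ∈ K := hK.2 σ hσK ρ' hρ's
  have hρ'card : ρ'.card = μ.card := by
    rw [hρ'def, Finset.card_insert_of_notMem (fun hh => ha (Finset.mem_of_mem_erase hh)),
      Finset.card_erase_of_mem hxμ]
    omega
  have hρ'ne : ρ'.Nonempty := ⟨a, Finset.mem_insert_self a _⟩
  have hρρ' : ρ ⊆ ρ' := by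
    intro y hy
    rcases Finset.mem_insert.mp (hρs hy) with hya | hy'
    · rw [hya]; exact Finset.mem_insert_self a _
    · exact Finset.mem_insert_of_mem
        (Finset.mem_erase.mpr ⟨fun hh => hxρ (hh ▸ hy), hνs hy'⟩)
  have hρ'neμ : ρ' ≠ μ := fun hh => ha (hh ▸ Finset.mem_insert_self a _)
  -- μ ≻ ρ' since ρ' is a facet of σ other than μ
  have h2' : h.succ μ ρ' :=
    h.mu_greatest σ hσK hσne ρ' hρ's (by omega) hρ'neμ
  -- hence ¬ (μ(ρ') ≻ ν), else ρ' ≻ μ contradicting μ ≻ ρ'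
  have hμρ'K : h.mu ρ' ∈ K := hK.2 ρ' hρ'K _ (h.mu_subset ρ' hρ'K hρ'ne)
  have h3 : ¬ h.succ (h.mu ρ') ν := by
    intro hh
    have : h.succ ρ' μ := h.hered ρ' hρ'K μ hμK hρ'ne hμne hh
    exact h.irrefl μ hμK (h.trans μ hμK ρ' hρ'K μ hμK h2' this)
  have hμρ'neν : h.mu ρ' ≠ ν := by
    intro hh
    have hxρ' : x ∉ ρ' := by
      rw [hρ'def]
      simp only [Finset.mem_insert, Finset.mem_erase]
      push_neg
      exact ⟨hxa, fun hh' => absurd rfl hh'⟩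
    exact hxρ' (h.mu_subset ρ' hρ'K hρ'ne (hh ▸ hxν))
  have h4 : h.succ ν (h.mu ρ') :=
    (h.total ν hνK _ hμρ'K (fun hh => hμρ'neν hh.symm)).resolve_right h3
  -- ρ is a facet of ρ', so μ(ρ') ≽ ρ, hence ν ≻ ρ
  have hρcard' : ρ.card + 1 = ρ'.card := by omega
  have h5 : h.succ ν ρ := by
    by_cases hh : ρ = h.mu ρ'
    · exact hh ▸ h4
    · exact h.trans ν hνK _ hμρ'K ρ hρK h4 (h.mu_greatest ρ' hρ'K hρ'ne ρ hρρ' hρcard' hh)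
  exact h.irrefl ν hνK (h.trans ν hνK ρ hρK ν hνK h5 h1)

/-- **Lemma `lem_flag`.**
Let `K` be a finite flag simplicial complex with a hereditary ordering `≻`, and let `r`
be a positive integer.  Suppose that for any two simplices `σ, τ ∈ K` with
`dim σ = dim τ = r` and `μ(σ) = μ(τ)` one has `σ ∪ τ ∈ K`.  Then for any two simplices
`σ, τ ∈ K` with `dim σ = dim τ > r` and `μ(σ) = μ(τ)` one also has `σ ∪ τ ∈ K`. -/
theorem union_mem_of_dim_gt
    (K : Finset (Finset V)) (hK : IsComplex K) (hflag : IsFlag K)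
    (h : HereditaryOrder K) (r : ℕ) (hr : 0 < r)
    (hyp : ∀ σ ∈ K, ∀ τ ∈ K, σ.card = r + 1 → τ.card = r + 1 →
      h.mu σ = h.mu τ → σ ∪ τ ∈ K) :
    ∀ σ ∈ K, ∀ τ ∈ K, σ.card = τ.card → r + 1 < σ.card →
      h.mu σ = h.mu τ → σ ∪ τ ∈ K := by
  suffices H : ∀ n, ∀ σ ∈ K, ∀ τ ∈ K, σ.card = n → τ.card = n → r + 1 ≤ n →
      h.mu σ = h.mu τ → σ ∪ τ ∈ K by
    intro σ hσ τ hτ hcard hgt hmu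
    exact H σ.card σ hσ τ hτ rfl hcard.symm (le_of_lt hgt) hmu
  intro n
  induction n using Nat.strong_induction_on with
  | _ n ih =>
  intro σ hσ τ hτ hσn hτn hrn hmu
  rcases eq_or_lt_of_le hrn with heq | hlt
  · exact hyp σ hσ τ hτ (hσn.trans heq.symm) (hτn.trans heq.symm) hmu
  -- n ≥ r + 2; decompose σ = insert a μ, τ = insert b μ
  set μ := h.mu σ with hμdef
  have hσne : σ.Nonempty := Finset.card_pos.mp (by omega)
  have hτne : τ.Nonempty := Finset.card_pos.mp (by omega)
  have hμsσ : μ ⊆ σ := h.mu_subset σ hσ hσne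
  have hμsτ : μ ⊆ τ := hmu ▸ h.mu_subset τ hτ hτne
  have hμcard : μ.card + 1 = σ.card := h.mu_card σ hσ hσne
  have hμK : μ ∈ K := hK.2 σ hσ μ hμsσ
  have hμne : μ.Nonempty := Finset.card_pos.mp (by omega)
  obtain ⟨a, haeq⟩ : ∃ a, σ \ μ = {a} :=
    Finset.card_eq_one.mp (by rw [Finset.card_sdiff_of_subset hμsσ]; omega)
  obtain ⟨b, hbeq⟩ : ∃ b, τ \ μ = {b} := by
    refine Finset.card_eq_one.mp ?_
    rw [Finset.card_sdiff_of_subset hμsτ]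
    have := h.mu_card τ hτ hτne
    rw [← hmu] at this
    omega
  have haμ : a ∉ μ := by
    have : a ∈ σ \ μ := haeq ▸ Finset.mem_singleton_self a
    exact (Finset.mem_sdiff.mp this).2
  have hbμ : b ∉ μ := by
    have : b ∈ τ \ μ := hbeq ▸ Finset.mem_singleton_self b
    exact (Finset.mem_sdiff.mp this).2
  have hσeq : σ = insert a μ := by
    have := Finset.sdiff_union_of_subset hμsσ
    rw [haeq] at this
    rw [← this, Finset.insert_eq]
  have hτeq : τ = insert b μ := by
    have := Finset.sdiff_union_of_subset hμsτ
    rw [hbeq] at this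
    rw [← this, Finset.insert_eq]
  by_cases hab : a = b
  · have : σ = τ := by rw [hσeq, hτeq, hab]
    rw [this, Finset.union_self]
    exact hτ
  -- show {a, b} ∈ K via the key lemma and induction
  set ν := h.mu μ with hνdef
  have hνsμ : ν ⊆ μ := h.mu_subset μ hμK hμne
  have hνK : ν ∈ K := hK.2 μ hμK ν hνsμ
  have hνcard : ν.card + 1 = μ.card := h.mu_card μ hμK hμne
  have haν : a ∉ ν := fun hh => haμ (hνsμ hh)
  have hbν : b ∉ ν := fun hh => hbμ (hνsμ hh)
  have hmuσ' : h.mu (insert a ν) = ν :=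
    mu_step K hK h hσ (by omega) haμ hσeq
  have hmuτ' : h.mu (insert b ν) = ν := by
    have := mu_step K hK h hτ (by omega) (hmu ▸ hbμ) (by rw [← hmu]; exact hτeq)
    rwa [← hmu] at this
  have hσ'K : insert a ν ∈ K := by
    refine hK.2 σ hσ _ ?_
    intro y hy
    rcases Finset.mem_insert.mp hy with hya | hy
    · rw [hya, hσeq]; exact Finset.mem_insert_self a μ
    · exact hμsσ (hνsμ hy)
  have hτ'K : insert b ν ∈ K := by
    refine hK.2 τ hτ _ ?_
    intro y hy
    rcases Finset.mem_insert.mp hy with hyb | hy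
    · rw [hyb, hτeq]; exact Finset.mem_insert_self b μ
    · exact hμsτ (hνsμ hy)
  have hσ'card : (insert a ν).card = n - 1 := by
    rw [Finset.card_insert_of_notMem haν]; omega
  have hτ'card : (insert b ν).card = n - 1 := by
    rw [Finset.card_insert_of_notMem hbν]; omega
  have hunion : insert a ν ∪ insert b ν ∈ K :=
    ih (n - 1) (by omega) _ hσ'K _ hτ'K hσ'card hτ'card (by omega)
      (hmuσ'.trans hmuτ'.symm)
  have habK : ({a, b} : Finset V) ∈ K := by
    refine hK.2 _ hunion _ ?_
    intro y hy
    rcases Finset.mem_insert.mp hy with hya | hy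
    · rw [hya]; exact Finset.mem_union_left _ (Finset.mem_insert_self a ν)
    · rw [Finset.mem_singleton] at hy
      rw [hy]; exact Finset.mem_union_right _ (Finset.mem_insert_self b ν)
  -- conclude by flagness
  refine hflag (σ ∪ τ) ?_ ?_
  · intro u hu
    rcases Finset.mem_union.mp hu with hu | hu
    · exact hK.2 σ hσ {u} (Finset.singleton_subset_iff.mpr hu)
    · exact hK.2 τ hτ {u} (Finset.singleton_subset_iff.mpr hu)
  · intro u hu v hv huv
    have key : ∀ w, w ∈ σ ∪ τ → w = a ∨ w = b ∨ w ∈ μ := by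
      intro w hw
      rcases Finset.mem_union.mp hw with hw | hw
      · rw [hσeq] at hw
        rcases Finset.mem_insert.mp hw with rfl | hw
        · exact Or.inl rfl
        · exact Or.inr (Or.inr hw)
      · rw [hτeq] at hw
        rcases Finset.mem_insert.mp hw with rfl | hw
        · exact Or.inr (Or.inl rfl)
        · exact Or.inr (Or.inr hw)
    have pairσ : ∀ u' v', u' ∈ σ → v' ∈ σ → ({u', v'} : Finset V) ∈ K := by
      intro u' v' hu' hv'
      exact hK.2 σ hσ _ (Finset.insert_subset hu' (Finset.singleton_subset_iff.mpr hv'))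
    have pairτ : ∀ u' v', u' ∈ τ → v' ∈ τ → ({u', v'} : Finset V) ∈ K := by
      intro u' v' hu' hv'
      exact hK.2 τ hτ _ (Finset.insert_subset hu' (Finset.singleton_subset_iff.mpr hv'))
    have haσ : a ∈ σ := hσeq ▸ Finset.mem_insert_self a μ
    have hbτ : b ∈ τ := hτeq ▸ Finset.mem_insert_self b μ
    rcases key u hu with rfl | rfl | huμ
    · rcases key v hv with rfl | rfl | hvμ
      · exact absurd rfl huv
      · exact habK
      · exact pairσ u v haσ (hμsσ hvμ)
    · rcases key v hv with rfl | rfl | hvμ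
      · have : ({u, v} : Finset V) = {v, u} := Finset.pair_comm u v
        rw [this]; exact habK
      · exact absurd rfl huv
      · exact pairτ u v hbτ (hμsτ hvμ)
    · rcases key v hv with rfl | rfl | hvμ
      · exact pairσ u v (hμsσ huμ) haσ
      · exact pairτ u v (hμsτ huμ) hbτ
      · exact pairσ u v (hμsσ huμ) (hμsσ hvμ)
end

section
/- Let K be a finite simplicial complex, let ≻ be a hereditary ordering of K, and let r be a positive integer. Suppose that for any two simplices σ, τ ∈ K with dim σ = dim τ ≥ r and μ(σ) = μ(τ), one has σ ∪ τ ∈ K. Then K collapses on a subcomplex of dimension less than r. -/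
open Finset

variable {V : Type*} [DecidableEq V]

set_option linter.unusedSectionVars false

section Aux

variable {K : Finset (Finset V)} (h : HereditaryOrder K)

lemma ho_asymm {x y : Finset V} (hx : x ∈ K) (hy : y ∈ K)
    (h1 : h.succ x y) (h2 : h.succ y x) : False :=
  h.irrefl x hx (h.trans x hx y hy x hx h1 h2)

lemma ho_exists_max (A : Finset (Finset V)) (hA : A.Nonempty) (hAK : A ⊆ K) :
    ∃ σ ∈ A, ∀ y ∈ A, y ≠ σ → h.succ σ y := by
  classical
  induction A using Finset.induction_on with
  | empty => exact absurd hA (by simp)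
  | @insert a s ha IH =>
    have haK : a ∈ K := hAK (mem_insert_self a s)
    by_cases hs : s.Nonempty
    · obtain ⟨σ', hσ's, hmax'⟩ := IH hs ((subset_insert a s).trans hAK)
      have hσ'K : σ' ∈ K := hAK (mem_insert_of_mem hσ's)
      have hne : a ≠ σ' := fun e => ha (e ▸ hσ's)
      rcases h.total a haK σ' hσ'K hne with h1 | h1
      · refine ⟨a, mem_insert_self a s, ?_⟩
        intro y hy hyne
        rcases mem_insert.mp hy with rfl | hys
        · exact absurd rfl hyne
        · by_cases hyσ : y = σ'
          · exact hyσ ▸ h1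
          · exact h.trans a haK σ' hσ'K y (hAK (mem_insert_of_mem hys)) h1 (hmax' y hys hyσ)
      · refine ⟨σ', mem_insert_of_mem hσ's, ?_⟩
        intro y hy hyne
        rcases mem_insert.mp hy with rfl | hys
        · exact h1
        · exact hmax' y hys hyne
    · rw [not_nonempty_iff_eq_empty] at hs
      subst hs
      refine ⟨a, mem_insert_self a ∅, ?_⟩
      intro y hy hyne
      simp at hy
      exact absurd hy hyne

lemma ho_exists_min (A : Finset (Finset V)) (hA : A.Nonempty) (hAK : A ⊆ K) :
    ∃ σ ∈ A, ∀ y ∈ A, y ≠ σ → h.succ y σ := by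
  classical
  induction A using Finset.induction_on with
  | empty => exact absurd hA (by simp)
  | @insert a s ha IH =>
    have haK : a ∈ K := hAK (mem_insert_self a s)
    by_cases hs : s.Nonempty
    · obtain ⟨σ', hσ's, hmin'⟩ := IH hs ((subset_insert a s).trans hAK)
      have hσ'K : σ' ∈ K := hAK (mem_insert_of_mem hσ's)
      have hne : a ≠ σ' := fun e => ha (e ▸ hσ's)
      rcases h.total a haK σ' hσ'K hne with h1 | h1
      · refine ⟨σ', mem_insert_of_mem hσ's, ?_⟩
        intro y hy hyne
        rcases mem_insert.mp hy with rfl | hys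
        · exact h1
        · exact hmin' y hys hyne
      · refine ⟨a, mem_insert_self a s, ?_⟩
        intro y hy hyne
        rcases mem_insert.mp hy with rfl | hys
        · exact absurd rfl hyne
        · by_cases hyσ : y = σ'
          · exact hyσ ▸ h1
          · exact h.trans y (hAK (mem_insert_of_mem hys)) σ' hσ'K a haK (hmin' y hys hyσ) h1
    · rw [not_nonempty_iff_eq_empty] at hs
      subst hs
      refine ⟨a, mem_insert_self a ∅, ?_⟩
      intro y hy hyne
      simp at hy
      exact absurd hy hyne

lemma exists_insert_of_facet {f w : Finset V} (hs : f ⊆ w) (hc : f.card + 1 = w.card) :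
    ∃ x, x ∉ f ∧ w = insert x f := by
  have h1 : (w \ f).card = 1 := by rw [card_sdiff_of_subset hs]; omega
  obtain ⟨x, hx⟩ := Finset.card_eq_one.mp h1
  have hxw : x ∈ w \ f := hx ▸ mem_singleton_self x
  refine ⟨x, (mem_sdiff.mp hxw).2, ?_⟩
  apply Finset.Subset.antisymm
  · intro y hy
    by_cases hyf : y ∈ f
    · exact mem_insert_of_mem hyf
    · have : y ∈ w \ f := mem_sdiff.mpr ⟨hy, hyf⟩
      rw [hx, mem_singleton] at this
      exact this ▸ mem_insert_self x f
  · exact insert_subset (mem_sdiff.mp hxw).1 hs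

lemma mIter_mem (hK : IsComplex K) {m : Finset V} (hm : m ∈ K) :
    ∀ i, i ≤ m.card → (h.mu^[i] m) ⊆ m ∧ (h.mu^[i] m) ∈ K ∧ (h.mu^[i] m).card = m.card - i := by
  intro i
  induction i with
  | zero =>
    intro _
    simp only [Function.iterate_zero_apply]
    exact ⟨Finset.Subset.refl m, hm, by omega⟩
  | succ i IH =>
    intro hi
    obtain ⟨hsub, hmem, hcard⟩ := IH (Nat.le_of_succ_le hi)
    have hne : (h.mu^[i] m).Nonempty := card_pos.mp (by omega)
    rw [Function.iterate_succ_apply']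
    refine ⟨(h.mu_subset _ hmem hne).trans hsub, hK.2 _ hmem _ (h.mu_subset _ hmem hne), ?_⟩
    have := h.mu_card _ hmem hne
    omega

lemma ho_claimK (hK : IsComplex K) {m : Finset V} (hm : m ∈ K) :
    ∀ i, 1 ≤ i → i ≤ m.card → ∀ v ⊆ m, v.card = m.card - i → v ≠ h.mu^[i] m →
      h.succ (h.mu^[i] m) v := by
  intro i
  induction i with
  | zero => intro h1; omega
  | succ i IH =>
    intro _ hle v hvsub hvcard hvne
    have hvK : v ∈ K := hK.2 m hm v hvsub
    by_cases hi0 : i = 0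
    · subst hi0
      simp only [zero_add, Function.iterate_one] at hvne ⊢
      exact h.mu_greatest m hm (card_pos.mp (by omega)) v hvsub (by omega) hvne
    · have hi1 : 1 ≤ i := Nat.one_le_iff_ne_zero.mpr hi0
      obtain ⟨hMisub, hMiK, hMicard⟩ := mIter_mem h hK hm i (by omega)
      obtain ⟨hMi1sub, hMi1K, hMi1card⟩ := mIter_mem h hK hm (i+1) hle
      have hmuMi : h.mu (h.mu^[i] m) = h.mu^[i+1] m := (Function.iterate_succ_apply' h.mu i m).symm
      have hMine : (h.mu^[i] m).Nonempty := card_pos.mp (by omega)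
      by_contra hcon
      have hsv : h.succ v (h.mu^[i+1] m) := by
        rcases h.total v hvK _ hMi1K hvne with h1 | h1
        · exact h1
        · exact absurd h1 hcon
      have hxne : (m \ v).Nonempty := by
        rw [← card_pos, card_sdiff_of_subset hvsub]; omega
      obtain ⟨x, hx⟩ := hxne
      have hxm : x ∈ m := (mem_sdiff.mp hx).1
      have hxv : x ∉ v := (mem_sdiff.mp hx).2
      have hv'sub : insert x v ⊆ m := insert_subset hxm hvsub
      have hv'card : (insert x v).card = m.card - i := by
        rw [card_insert_of_notMem hxv]; omega
      have hv'K : insert x v ∈ K := hK.2 m hm _ hv'sub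
      have hv'ne : (insert x v).Nonempty := insert_nonempty x v
      by_cases hcase : insert x v = h.mu^[i] m
      · have := h.mu_greatest (h.mu^[i] m) hMiK hMine v (hcase ▸ subset_insert x v)
          (by omega) (by rw [hmuMi]; exact hvne)
        rw [hmuMi] at this
        exact hcon this
      · have hMiv' : h.succ (h.mu^[i] m) (insert x v) := IH hi1 (by omega) _ hv'sub hv'card hcase
        have hμv'sub : h.mu (insert x v) ⊆ insert x v := h.mu_subset _ hv'K hv'ne
        have hμv'K : h.mu (insert x v) ∈ K := hK.2 _ hv'K _ hμv'sub
        have key : h.succ (h.mu (insert x v)) (h.mu^[i+1] m) := by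
          by_cases hμv : h.mu (insert x v) = v
          · rw [hμv]; exact hsv
          · have h2 : h.succ (h.mu (insert x v)) v :=
              h.mu_greatest _ hv'K hv'ne v (subset_insert x v)
                (by rw [card_insert_of_notMem hxv]) (fun e => hμv e.symm)
            exact h.trans _ hμv'K _ hvK _ hMi1K h2 hsv
        have : h.succ (insert x v) (h.mu^[i] m) :=
          h.hered _ hv'K _ hMiK hv'ne hMine (by rw [hmuMi]; exact key)
        exact ho_asymm h hv'K hMiK this hMiv'

lemma ho_lemM (hK : IsComplex K) {m : Finset V} {e : V} (hm : m ∈ K) (he : e ∉ m)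
    (hins : insert e m ∈ K) (hμ : h.mu (insert e m) = m) :
    ∀ i, i ≤ m.card → h.mu (insert e (h.mu^[i] m)) = h.mu^[i] m := by
  intro i
  induction i with
  | zero =>
    intro _
    simpa using hμ
  | succ i IH =>
    intro hle
    have hIH := IH (by omega)
    obtain ⟨hMisub, hMiK, hMicard⟩ := mIter_mem h hK hm i (by omega)
    obtain ⟨hMi1sub, hMi1K, hMi1card⟩ := mIter_mem h hK hm (i+1) hle
    have hmuMi : h.mu (h.mu^[i] m) = h.mu^[i+1] m := (Function.iterate_succ_apply' h.mu i m).symm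
    have heMi : e ∉ h.mu^[i] m := fun hc => he (hMisub hc)
    have heMi1 : e ∉ h.mu^[i+1] m := fun hc => he (hMi1sub hc)
    have hWK : insert e (h.mu^[i+1] m) ∈ K :=
      hK.2 (insert e m) hins _ (insert_subset_insert e hMi1sub)
    have hWne : (insert e (h.mu^[i+1] m)).Nonempty := insert_nonempty _ _
    have hgsub : h.mu (insert e (h.mu^[i+1] m)) ⊆ insert e (h.mu^[i+1] m) :=
      h.mu_subset _ hWK hWne
    have hgcard : (h.mu (insert e (h.mu^[i+1] m))).card + 1 = (insert e (h.mu^[i+1] m)).card :=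
      h.mu_card _ hWK hWne
    have hWcard : (insert e (h.mu^[i+1] m)).card = (h.mu^[i+1] m).card + 1 :=
      card_insert_of_notMem heMi1
    by_contra hgne
    have hMine : (h.mu^[i] m).Nonempty := card_pos.mp (by omega)
    have hMi1nonempty : (h.mu^[i+1] m).Nonempty := by
      rcases Finset.eq_empty_or_nonempty (h.mu^[i+1] m) with hE | hne
      · exfalso
        apply hgne
        have hcz : (h.mu (insert e (h.mu^[i+1] m))).card = 0 := by
          have hone : (insert e (h.mu^[i+1] m)).card = 1 := by rw [hE]; simp
          omega
        rw [card_eq_zero.mp hcz, hE]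
      · exact hne
    have h1 : h.succ (h.mu (insert e (h.mu^[i+1] m))) (h.mu^[i+1] m) :=
      h.mu_greatest _ hWK hWne _ (subset_insert _ _) (by rw [hWcard]) (fun hq => hgne hq.symm)
    have h2 : h.succ (insert e (h.mu^[i+1] m)) (h.mu^[i] m) :=
      h.hered _ hWK _ hMiK hWne hMine (by rw [hmuMi]; exact h1)
    have hWbig : insert e (h.mu^[i] m) ∈ K := hK.2 _ hins _ (insert_subset_insert e hMisub)
    have hW'sub : insert e (h.mu^[i+1] m) ⊆ insert e (h.mu^[i] m) := by
      apply insert_subset_insert e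
      rw [← hmuMi]
      exact h.mu_subset _ hMiK hMine
    have hmucard : (h.mu^[i+1] m).card + 1 = (h.mu^[i] m).card := by omega
    have h3 : h.succ (h.mu^[i] m) (insert e (h.mu^[i+1] m)) := by
      have := h.mu_greatest (insert e (h.mu^[i] m)) hWbig (insert_nonempty _ _)
        (insert e (h.mu^[i+1] m)) hW'sub
        (by rw [hWcard, card_insert_of_notMem heMi]; omega)
        (by rw [hIH]; intro hq; exact heMi (hq ▸ mem_insert_self e _))
      rwa [hIH] at this
    exact ho_asymm h hWK hMiK h2 h3

lemma ho_lemN (hK : IsComplex K) {m : Finset V} {a b : V}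
    (hm : m ∈ K) (ha : a ∉ m) (hb : b ∉ m)
    (hσK : insert a m ∈ K) (hτK : insert b m ∈ K)
    (hμσ : h.mu (insert a m) = m) (hμτ : h.mu (insert b m) = m) :
    ∀ n, ∀ w ∈ K, w ⊆ insert a (insert b m) → (a ∈ w ∨ b ∈ w) → w.card = n →
      n ≤ m.card → h.succ (h.mu^[m.card - n] m) w := by
  intro n
  induction n using Nat.strong_induction_on with
  | _ n IH =>
  intro w hwK hwsub hwab hwcard hnle
  have hwne : w.Nonempty := by
    rcases hwab with h' | h'
    · exact ⟨a, h'⟩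
    · exact ⟨b, h'⟩
  have hn1 : 1 ≤ n := by
    have := hwne.card_pos; omega
  obtain ⟨hMisub, hMiK, hMicard⟩ := mIter_mem h hK hm (m.card - n) (by omega)
  obtain ⟨hMi1sub, hMi1K, hMi1card⟩ := mIter_mem h hK hm (m.card - n + 1) (by omega)
  have hmuMi : h.mu (h.mu^[m.card - n] m) = h.mu^[m.card - n + 1] m :=
    (Function.iterate_succ_apply' h.mu (m.card - n) m).symm
  have hMine : (h.mu^[m.card - n] m).Nonempty := card_pos.mp (by omega)
  have hwMine : w ≠ h.mu^[m.card - n] m := by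
    intro e
    rcases hwab with h' | h'
    · exact ha (hMisub (e ▸ h'))
    · exact hb (hMisub (e ▸ h'))
  by_contra hcon
  have hswMi : h.succ w (h.mu^[m.card - n] m) := by
    rcases h.total w hwK _ hMiK hwMine with h1 | h1
    · exact h1
    · exact absurd h1 hcon
  have hfsub : h.mu w ⊆ w := h.mu_subset w hwK hwne
  have hfcard : (h.mu w).card + 1 = w.card := h.mu_card w hwK hwne
  have hfK : h.mu w ∈ K := hK.2 w hwK _ hfsub
  have hdich : h.mu w = h.mu^[m.card - n + 1] m ∨ h.succ (h.mu w) (h.mu^[m.card - n + 1] m) := by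
    by_cases hfe : h.mu w = h.mu^[m.card - n + 1] m
    · exact Or.inl hfe
    · rcases h.total _ hfK _ hMi1K hfe with h1 | h1
      · exact Or.inr h1
      · exfalso
        have h2 : h.succ (h.mu^[m.card - n] m) w :=
          h.hered _ hMiK w hwK hMine hwne (by rw [hmuMi]; exact h1)
        exact ho_asymm h hMiK hwK h2 hswMi
  rcases hdich with hfe | hsf
  · obtain ⟨x, hxf, hxw⟩ := exists_insert_of_facet hfsub hfcard
    have hxab : x = a ∨ x = b := by
      rcases hwab with hA | hB
      · left
        have : a ∈ insert x (h.mu w) := hxw ▸ hA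
        rcases mem_insert.mp this with e | e
        · exact e.symm
        · exfalso; exact ha (hMi1sub (hfe ▸ e))
      · right
        have : b ∈ insert x (h.mu w) := hxw ▸ hB
        rcases mem_insert.mp this with e | e
        · exact e.symm
        · exfalso; exact hb (hMi1sub (hfe ▸ e))
    have hxprops : x ∉ m ∧ insert x m ∈ K ∧ h.mu (insert x m) = m := by
      rcases hxab with rfl | rfl
      · exact ⟨ha, hσK, hμσ⟩
      · exact ⟨hb, hτK, hμτ⟩
    have hMeq := ho_lemM h hK hm hxprops.1 hxprops.2.1 hxprops.2.2 (m.card - n) (by omega)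
    have hIns : insert x (h.mu^[m.card - n] m) ∈ K :=
      hK.2 _ hxprops.2.1 _ (insert_subset_insert x hMisub)
    have hxMi : x ∉ h.mu^[m.card - n] m := fun hc => hxprops.1 (hMisub hc)
    have hsubW : w ⊆ insert x (h.mu^[m.card - n] m) := by
      rw [hxw, hfe]
      apply insert_subset_insert x
      rw [← hmuMi]
      exact h.mu_subset _ hMiK hMine
    have hcardW : w.card + 1 = (insert x (h.mu^[m.card - n] m)).card := by
      rw [card_insert_of_notMem hxMi]; omega
    have := h.mu_greatest (insert x (h.mu^[m.card - n] m)) hIns (insert_nonempty _ _)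
      w hsubW hcardW (by rw [hMeq]; exact hwMine)
    rw [hMeq] at this
    exact ho_asymm h hMiK hwK this hswMi
  · rcases Classical.em (a ∈ h.mu w ∨ b ∈ h.mu w) with hfab | hfab
    · have heq : m.card - (n-1) = m.card - n + 1 := by omega
      have hIHf := IH (n-1) (by omega) (h.mu w) hfK (hfsub.trans hwsub) hfab (by omega) (by omega)
      rw [heq] at hIHf
      exact ho_asymm h hMi1K hfK hIHf hsf
    · push_neg at hfab
      have hfm : h.mu w ⊆ m := by
        intro y hy
        have := hwsub (hfsub hy)
        rcases mem_insert.mp this with e | e'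
        · exact absurd (e ▸ hy) hfab.1
        · rcases mem_insert.mp e' with e | e
          · exact absurd (e ▸ hy) hfab.2
          · exact e
      have hfne : h.mu w ≠ h.mu^[m.card - n + 1] m := by
        intro e
        exact h.irrefl _ hMi1K (e ▸ hsf)
      have := ho_claimK h hK hm (m.card - n + 1) (by omega) (by omega) (h.mu w) hfm
        (by omega) hfne
      exact ho_asymm h hMi1K hfK this hsf

lemma ho_claimD (hK : IsComplex K) {m : Finset V} {a b : V}
    (hm : m ∈ K) (ha : a ∉ m) (hb : b ∉ m) (hab : a ≠ b)
    (hσK : insert a m ∈ K) (hτK : insert b m ∈ K)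
    (hμσ : h.mu (insert a m) = m) (hμτ : h.mu (insert b m) = m)
    (huK : insert a (insert b m) ∈ K) :
    h.mu (insert a (insert b m)) = insert a m ∨ h.mu (insert a (insert b m)) = insert b m := by
  have hau : a ∈ insert a (insert b m) := mem_insert_self _ _
  have hbu : b ∈ insert a (insert b m) := mem_insert_of_mem (mem_insert_self _ _)
  have hmu : m ⊆ insert a (insert b m) := (subset_insert b m).trans (subset_insert a _)
  have hanb : a ∉ insert b m := by
    intro hc
    rcases mem_insert.mp hc with e | e
    · exact hab e
    · exact ha e
  have hucard : (insert a (insert b m)).card = m.card + 2 := by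
    rw [card_insert_of_notMem hanb, card_insert_of_notMem hb]
  have hune : (insert a (insert b m)).Nonempty := insert_nonempty _ _
  have hgsub : h.mu (insert a (insert b m)) ⊆ insert a (insert b m) :=
    h.mu_subset _ huK hune
  have hgcard : (h.mu (insert a (insert b m))).card + 1 = (insert a (insert b m)).card :=
    h.mu_card _ huK hune
  have hgK : h.mu (insert a (insert b m)) ∈ K := hK.2 _ huK _ hgsub
  by_cases hag : a ∈ h.mu (insert a (insert b m))
  · by_cases hbg : b ∈ h.mu (insert a (insert b m))
    · exfalso
      have hσsub : insert a m ⊆ insert a (insert b m) := insert_subset hau hmu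
      have hσcard : (insert a m).card + 1 = (insert a (insert b m)).card := by
        rw [card_insert_of_notMem ha]; omega
      have hσne : insert a m ≠ h.mu (insert a (insert b m)) := by
        intro e
        have : b ∈ insert a m := e ▸ hbg
        rcases mem_insert.mp this with e' | e'
        · exact hab e'.symm
        · exact hb e'
      have h1 : h.succ (h.mu (insert a (insert b m))) (insert a m) :=
        h.mu_greatest _ huK hune _ hσsub hσcard hσne
      have hgne : (h.mu (insert a (insert b m))).Nonempty := ⟨a, hag⟩
      have hfsub : h.mu (h.mu (insert a (insert b m))) ⊆ h.mu (insert a (insert b m)) :=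
        h.mu_subset _ hgK hgne
      have hfcard : (h.mu (h.mu (insert a (insert b m)))).card + 1
          = (h.mu (insert a (insert b m))).card := h.mu_card _ hgK hgne
      have hfK : h.mu (h.mu (insert a (insert b m))) ∈ K := hK.2 _ hgK _ hfsub
      have hfu : h.mu (h.mu (insert a (insert b m))) ⊆ insert a (insert b m) :=
        hfsub.trans hgsub
      have hfab : a ∈ h.mu (h.mu (insert a (insert b m)))
          ∨ b ∈ h.mu (h.mu (insert a (insert b m))) := by
        by_contra hc
        push_neg at hc
        have hfm : h.mu (h.mu (insert a (insert b m))) ⊆ m := by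
          intro y hy
          have := hfu hy
          rcases mem_insert.mp this with e | e'
          · exact absurd (e ▸ hy) hc.1
          · rcases mem_insert.mp e' with e | e
            · exact absurd (e ▸ hy) hc.2
            · exact e
        have hfeq : h.mu (h.mu (insert a (insert b m))) = m :=
          Finset.eq_of_subset_of_card_le hfm (by omega)
        have hmg : m ⊆ h.mu (insert a (insert b m)) := by
          have h' := hfsub; rw [hfeq] at h'; exact h'
        have husub : insert a (insert b m) ⊆ h.mu (insert a (insert b m)) :=
          insert_subset hag (insert_subset hbg hmg)
        have := card_le_card husub
        omega
      have hNf := ho_lemN h hK hm ha hb hσK hτK hμσ hμτ m.card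
        (h.mu (h.mu (insert a (insert b m)))) hfK hfu hfab (by omega) le_rfl
      rw [Nat.sub_self, Function.iterate_zero_apply] at hNf
      have h2 : h.succ (insert a m) (h.mu (insert a (insert b m))) :=
        h.hered _ hσK _ hgK (insert_nonempty _ _) hgne (by rw [hμσ]; exact hNf)
      exact ho_asymm h hgK hσK h1 h2
    · left
      have hsub : h.mu (insert a (insert b m)) ⊆ insert a m := by
        intro y hy
        have := hgsub hy
        rcases mem_insert.mp this with e | e'
        · exact e ▸ mem_insert_self a m
        · rcases mem_insert.mp e' with e | e
          · exact absurd (e ▸ hy) hbg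
          · exact mem_insert_of_mem e
      apply Finset.eq_of_subset_of_card_le hsub
      rw [card_insert_of_notMem ha]
      omega
  · right
    have hsub : h.mu (insert a (insert b m)) ⊆ insert b m := by
      intro y hy
      have := hgsub hy
      rcases mem_insert.mp this with e | e'
      · exact absurd (e ▸ hy) hag
      · exact e'
    apply Finset.eq_of_subset_of_card_le hsub
    rw [card_insert_of_notMem hb]
    omega

def GoodInv (K : Finset (Finset V)) (h : HereditaryOrder K) (L : Finset (Finset V)) : Prop :=
  L ⊆ K ∧ (∅ : Finset V) ∈ L ∧ (∀ s ∈ L, ∀ t ⊆ s, t ∈ L) ∧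
    ∀ x ∈ K, x ∉ L → ∃ t ∈ K, t.Nonempty ∧ h.mu t ∉ L ∧ (x = t ∨ x = h.mu t)

lemma ho_aux (hK : IsComplex K) (r : ℕ) (hr : 0 < r)
    (hyp : ∀ σ ∈ K, ∀ τ ∈ K, σ.card = τ.card → r + 1 ≤ σ.card → h.mu σ = h.mu τ → σ ∪ τ ∈ K) :
    ∀ n, ∀ L : Finset (Finset V), L.card ≤ n → GoodInv K h L →
      ∃ L', CollapsesTo L L' ∧ ∀ s ∈ L', s.card ≤ r := by
  intro n
  induction n with
  | zero =>
    intro L hL hInv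
    exfalso
    have : L = ∅ := card_eq_zero.mp (by omega)
    rw [this] at hInv
    exact absurd hInv.2.1 (notMem_empty _)
  | succ n IH =>
    intro L hLcard hInv
    obtain ⟨hLK, hemptyL, hclosed, hrem⟩ := hInv
    by_cases hall : ∀ s ∈ L, s.card ≤ r
    · exact ⟨L, Relation.ReflTransGen.refl, hall⟩
    push_neg at hall
    obtain ⟨s₀, hs₀L, hs₀c⟩ := hall
    obtain ⟨σ, hσL, hmax⟩ := ho_exists_max h L ⟨∅, hemptyL⟩ hLK
    have hσK : σ ∈ K := hLK hσL
    have hs₀K : s₀ ∈ K := hLK hs₀L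
    have hσcard : r + 1 ≤ σ.card := by
      by_contra hc
      push_neg at hc
      have hne : s₀ ≠ σ := fun e => by rw [e] at hs₀c; omega
      exact ho_asymm h hs₀K hσK (h.dim_succ s₀ hs₀K σ hσK (by omega)) (hmax s₀ hs₀L hne)
    have hσne : σ.Nonempty := card_pos.mp (by omega)
    have hmsub : h.mu σ ⊆ σ := h.mu_subset σ hσK hσne
    have hmcard : (h.mu σ).card + 1 = σ.card := h.mu_card σ hσK hσne
    have hmL : h.mu σ ∈ L := hclosed σ hσL _ hmsub
    have hmK : h.mu σ ∈ K := hLK hmL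
    have hmne : (h.mu σ).Nonempty := card_pos.mp (by omega)
    have hmneσ : h.mu σ ≠ σ := fun e => by
      have := congrArg Finset.card e; omega
    have hmaxim : ∀ ρ ∈ L, σ ⊆ ρ → ρ = σ := by
      intro ρ hρL hsub
      by_contra hne
      have hρK := hLK hρL
      have hlt : σ.card < ρ.card :=
        card_lt_card (Finset.ssubset_iff_subset_ne.mpr ⟨hsub, fun e => hne e.symm⟩)
      exact ho_asymm h hρK hσK (h.dim_succ ρ hρK σ hσK hlt) (hmax ρ hρL hne)
    have hcoface : ∀ ρ ∈ L, h.mu σ ⊆ ρ → ρ = h.mu σ ∨ ρ = σ := by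
      intro ρ hρL hmρ
      by_contra hc
      push_neg at hc
      obtain ⟨hρm, hρσ⟩ := hc
      have hρK := hLK hρL
      have hmltρ : (h.mu σ).card < ρ.card :=
        card_lt_card (Finset.ssubset_iff_subset_ne.mpr ⟨hmρ, fun e => hρm e.symm⟩)
      have hρle : ρ.card ≤ σ.card := by
        by_contra hgt
        push_neg at hgt
        exact ho_asymm h hρK hσK (h.dim_succ ρ hρK σ hσK hgt) (hmax ρ hρL hρσ)
      have hρcard : ρ.card = σ.card := by omega
      have hsσρ : h.succ σ ρ := hmax ρ hρL hρσ
      have hρne : ρ.Nonempty := card_pos.mp (by omega)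
      have hμρ : h.mu ρ = h.mu σ := by
        by_contra hne'
        have h1 := h.mu_greatest ρ hρK hρne (h.mu σ) hmρ (by omega) (fun e => hne' e.symm)
        have h2 : h.succ ρ σ := h.hered ρ hρK σ hσK hρne hσne h1
        exact ho_asymm h hρK hσK h2 hsσρ
      obtain ⟨m', hm'def⟩ : ∃ m', h.mu σ = m' := ⟨_, rfl⟩
      rw [hm'def] at hmsub hmcard hmK hmρ hμρ hmltρ
      obtain ⟨A, haA, hσeq⟩ := exists_insert_of_facet hmsub hmcard
      obtain ⟨B, hbB, hρeq⟩ := exists_insert_of_facet hmρ (by omega)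
      have hABeq : A = B → insert A m' = insert B m' := fun e => by rw [e]
      have hAB : A ≠ B := fun e => hρσ (hρeq.trans ((hABeq e).symm.trans hσeq.symm))
      have hAinsB : A ∉ insert B m' := by
        intro hc
        rcases mem_insert.mp hc with e | e
        · exact hAB e
        · exact haA e
      have huni : σ ∪ ρ = insert A (insert B m') := by
        rw [hσeq, hρeq]
        ext y
        simp only [mem_union, mem_insert]
        tauto
      have huK : insert A (insert B m') ∈ K := by
        rw [← huni]
        refine hyp σ hσK ρ hρK hρcard.symm hσcard ?_
        rw [hm'def, hμρ]
      have hσK' : insert A m' ∈ K := hσeq ▸ hσK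
      have hρK' : insert B m' ∈ K := hρeq ▸ hρK
      have hμσ' : h.mu (insert A m') = m' := by rw [← hσeq]; exact hm'def
      have hμρ' : h.mu (insert B m') = m' := by rw [← hρeq]; exact hμρ
      have hD := ho_claimD h hK hmK haA hbB hAB hσK' hρK' hμσ' hμρ' huK
      have hucard : (insert A (insert B m')).card = σ.card + 1 := by
        rw [card_insert_of_notMem hAinsB, card_insert_of_notMem hbB]
        omega
      have hσsubu : σ ⊆ insert A (insert B m') := by
        rw [hσeq]
        exact insert_subset (mem_insert_self _ _)
          ((subset_insert B _).trans (subset_insert A _))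
      have hune : (insert A (insert B m')).Nonempty := insert_nonempty _ _
      have hμu : h.mu (insert A (insert B m')) = σ := by
        rcases hD with hD | hD
        · rw [hD, ← hσeq]
        · exfalso
          have h1 : h.succ (h.mu (insert A (insert B m'))) σ :=
            h.mu_greatest _ huK hune σ hσsubu (by omega)
              (by rw [hD, ← hρeq]; exact fun e => hρσ e.symm)
          rw [hD, ← hρeq] at h1
          exact ho_asymm h hρK hσK h1 hsσρ
      classical
      have huW : insert A (insert B m') ∈
          K.filter (fun w => σ ⊆ w ∧ w.card = σ.card + 1 ∧ h.mu w = σ) :=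
        mem_filter.mpr ⟨huK, hσsubu, hucard, hμu⟩
      obtain ⟨w₀, hw₀W, hmin⟩ := ho_exists_min h
        (K.filter (fun w => σ ⊆ w ∧ w.card = σ.card + 1 ∧ h.mu w = σ))
        ⟨_, huW⟩ (filter_subset _ _)
      obtain ⟨hw₀K, hw₀sub, hw₀card, hw₀μ⟩ := mem_filter.mp hw₀W
      have hw₀L : w₀ ∉ L := by
        intro hw₀L
        have hne : w₀ ≠ σ := fun e => by rw [e] at hw₀card; omega
        exact ho_asymm h hw₀K hσK (h.dim_succ w₀ hw₀K σ hσK (by omega)) (hmax w₀ hw₀L hne)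
      obtain ⟨t, htK, htne, hμtL, hcase⟩ := hrem w₀ hw₀K hw₀L
      rcases hcase with hcase | hw₀t
      · rw [← hcase, hw₀μ] at hμtL
        exact hμtL hσL
      · have hw₀subt : w₀ ⊆ t := hw₀t ▸ h.mu_subset t htK htne
        have hw₀cardt : w₀.card + 1 = t.card := by
          have := h.mu_card t htK htne
          rw [← hw₀t] at this
          omega
        obtain ⟨y, hyw₀, hteq⟩ := exists_insert_of_facet hw₀subt hw₀cardt
        have hyσ : y ∉ σ := fun hc => hyw₀ (hw₀sub hc)
        have hSt : insert y σ ⊆ t := by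
          rw [hteq]
          exact insert_subset_insert y hw₀sub
        have hSK : insert y σ ∈ K := hK.2 t htK _ hSt
        have hScard : (insert y σ).card = σ.card + 1 := card_insert_of_notMem hyσ
        have hSneW₀ : insert y σ ≠ w₀ := fun e => hyw₀ (e ▸ mem_insert_self y σ)
        have hsw₀S : h.succ w₀ (insert y σ) := by
          have := h.mu_greatest t htK htne (insert y σ) hSt (by omega)
            (by rw [← hw₀t]; exact hSneW₀)
          rwa [← hw₀t] at this
        have hSne : (insert y σ).Nonempty := insert_nonempty _ _
        have hw₀ne : w₀.Nonempty := hσne.mono hw₀sub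
        have hμS : h.mu (insert y σ) = σ := by
          by_contra hne'
          have h1 : h.succ (h.mu (insert y σ)) σ :=
            h.mu_greatest _ hSK hSne σ (subset_insert y σ) (by omega) (fun e => hne' e.symm)
          have h2 : h.succ (insert y σ) w₀ :=
            h.hered _ hSK w₀ hw₀K hSne hw₀ne (by rw [hw₀μ]; exact h1)
          exact ho_asymm h hSK hw₀K h2 hsw₀S
        have hSW : insert y σ ∈
            K.filter (fun w => σ ⊆ w ∧ w.card = σ.card + 1 ∧ h.mu w = σ) :=
          mem_filter.mpr ⟨hSK, subset_insert y σ, hScard, hμS⟩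
        exact ho_asymm h hSK hw₀K (hmin _ hSW hSneW₀) hsw₀S
    have hfree : IsFreePair L σ (h.mu σ) :=
      ⟨hσL, hmL, hmne, hmsub, hmcard, hmaxim, hcoface⟩
    have hmem1 : h.mu σ ∈ L.erase σ := mem_erase.mpr ⟨hmneσ, hmL⟩
    have h2L : 2 ≤ L.card := by
      have := Finset.one_lt_card.mpr ⟨σ, hσL, h.mu σ, hmL, Ne.symm hmneσ⟩
      omega
    have hL'card : ((L.erase σ).erase (h.mu σ)).card + 2 = L.card := by
      rw [card_erase_of_mem hmem1, card_erase_of_mem hσL]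
      omega
    have hL'L : (L.erase σ).erase (h.mu σ) ⊆ L := (erase_subset _ _).trans (erase_subset _ _)
    have hmemL' : ∀ {x}, x ∈ (L.erase σ).erase (h.mu σ) → x ∈ L ∧ x ≠ σ ∧ x ≠ h.mu σ := by
      intro x hx
      have h1 := mem_erase.mp hx
      have h2 := mem_erase.mp h1.2
      exact ⟨h2.2, h2.1, h1.1⟩
    have hInv' : GoodInv K h ((L.erase σ).erase (h.mu σ)) := by
      refine ⟨hL'L.trans hLK, ?_, ?_, ?_⟩
      · exact mem_erase.mpr ⟨(hmne.ne_empty).symm, mem_erase.mpr ⟨(hσne.ne_empty).symm, hemptyL⟩⟩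
      · intro s hs t hts
        obtain ⟨hsL, hsσ, hsm⟩ := hmemL' hs
        have htL : t ∈ L := hclosed s hsL t hts
        refine mem_erase.mpr ⟨?_, mem_erase.mpr ⟨?_, htL⟩⟩
        · intro e
          rw [e] at hts
          rcases hcoface s hsL hts with e' | e'
          · exact hsm e'
          · exact hsσ e'
        · intro e
          rw [e] at hts
          exact hsσ (hmaxim s hsL hts)
      · intro x hxK hxL'
        by_cases hxL : x ∈ L
        · have hx : x = σ ∨ x = h.mu σ := by
            by_contra hc
            push_neg at hc
            exact hxL' (mem_erase.mpr ⟨hc.2, mem_erase.mpr ⟨hc.1, hxL⟩⟩)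
          exact ⟨σ, hσK, hσne, notMem_erase _ _, hx⟩
        · obtain ⟨t, htK, htne, hμtL, hcase⟩ := hrem x hxK hxL
          exact ⟨t, htK, htne, fun hc => hμtL (hL'L hc), hcase⟩
    obtain ⟨L'', hcol, hsmall⟩ := IH ((L.erase σ).erase (h.mu σ)) (by omega) hInv'
    exact ⟨L'', Relation.ReflTransGen.head ⟨σ, h.mu σ, hfree, rfl⟩ hcol, hsmall⟩

end Aux

/-- **Lemma `lem_sigma_tau`.**
Let `K` be a finite simplicial complex with a hereditary ordering `≻`, and let `r` be a
positive integer.  Suppose that for any two simplices `σ, τ ∈ K` with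
`dim σ = dim τ ≥ r` and `μ(σ) = μ(τ)` one has `σ ∪ τ ∈ K`.  Then `K` collapses on a
subcomplex of dimension less than `r`. -/
theorem hereditary_collapses_of_union_mem
    (K : Finset (Finset V)) (hK : IsComplex K)
    (h : HereditaryOrder K) (r : ℕ) (hr : 0 < r)
    (hyp : ∀ σ ∈ K, ∀ τ ∈ K, σ.card = τ.card → r + 1 ≤ σ.card →
      h.mu σ = h.mu τ → σ ∪ τ ∈ K) :
    ∃ L : Finset (Finset V), CollapsesTo K L ∧ ∀ σ ∈ L, σ.card ≤ r := by
  have hInv : GoodInv K h K :=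
    ⟨Finset.Subset.refl K, hK.1, hK.2, fun x hx hx' => absurd hx hx'⟩
  exact ho_aux h hK r hr hyp K.card K le_rfl hInv
end

section
/- Let B = (b_{jk})_{1 ≤ j,k ≤ n} be a complex n×n matrix with units on the diagonal such that |b_{jk}| < 3/2 whenever j < k and |b_{jk}| < 4^{−n} whenever j > k. Then the matrix B is non-degenerate (has nonzero determinant). -/
/-!
Conjugating `B` by `diag (4 ^ j)` multiplies `b_{jk}` by `4 ^ (j - k)`. In row `j` of the result the
entries right of the diagonal then sum to at most `(3/2) (1/4 + 1/16 + ⋯) = 1/2` and those left of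
it to at most `4 ^ (j + 1) / (3 · 4 ^ n) ≤ 1/3`, so the conjugate is strictly diagonally
dominant, and its determinant, which is `det B`, is nonzero by Gershgorin.
-/

open Finset

namespace Matrix

variable {K ι : Type*} [Fintype ι] [DecidableEq ι]

theorem det_diagonal_mul_mul_diagonal_inv [Field K] (A : Matrix ι ι K) {w : ι → K}
    (hw : ∀ k, w k ≠ 0) :
    (diagonal w * A * diagonal fun k => (w k)⁻¹).det = A.det := by
  rw [det_mul, det_mul, det_diagonal, det_diagonal, mul_right_comm, ← prod_mul_distrib]
  simp [hw]

theorem det_ne_zero_of_sum_row_scaled_lt_diag [NormedField K] (A : Matrix ι ι K) {w : ι → K}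
    (hw : ∀ k, w k ≠ 0)
    (h : ∀ j, ∑ k ∈ univ.erase j, ‖w j * A j k / w k‖ < ‖A j j‖) : A.det ≠ 0 := by
  rw [← det_diagonal_mul_mul_diagonal_inv A hw]
  refine det_ne_zero_of_sum_row_lt_diag fun j => ?_
  simp only [diagonal_mul, mul_diagonal, ← div_eq_mul_inv, mul_div_cancel_left₀ _ (hw j)]
  exact h j

end Matrix

section Geometric

variable {x : ℝ}

theorem geom_sum_succ_le (h0 : 0 ≤ x) (h1 : x < 1) (m : ℕ) :
    ∑ i ∈ range m, x ^ (i + 1) ≤ x / (1 - x) := by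
  have h := geom_sum_Ico_le_of_lt_one (m := 0) (n := m) h0 h1
  rw [← range_eq_Ico, pow_zero] at h
  simpa only [pow_succ', ← mul_sum, mul_one_div] using mul_le_mul_of_nonneg_left h h0

theorem sum_Ioo_pow_sub_le (h0 : 0 ≤ x) (h1 : x < 1) (j n : ℕ) :
    ∑ i ∈ Ioo j n, x ^ (i - j) ≤ x / (1 - x) := by
  rw [← Ico_add_one_left_eq_Ioo, sum_Ico_eq_sum_range]
  convert geom_sum_succ_le h0 h1 (n - (j + 1)) using 3
  omega

theorem Fin.sum_erase_le_of_le_geometric {n : ℕ} (a : Fin n → ℝ) (j : Fin n) {c : ℝ}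
    (hc : 0 ≤ c) (h0 : 0 ≤ x) (h1 : x < 1)
    (hlower : ∀ k < j, a k ≤ x ^ ((k : ℕ) + 1))
    (hupper : ∀ k, j < k → a k ≤ c * x ^ ((k : ℕ) - j)) :
    ∑ k ∈ univ.erase j, a k ≤ (1 + c) * (x / (1 - x)) := by
  have hsplit : univ.erase j = Iio j ∪ Ioi j := by
    ext k; simp [lt_or_lt_iff_ne]
  have hdisj : Disjoint (Iio j) (Ioi j) :=
    disjoint_left.2 fun k hk hk' => lt_asymm (mem_Iio.1 hk) (mem_Ioi.1 hk')
  have hlow : ∑ k ∈ Iio j, a k ≤ x / (1 - x) := calc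
    ∑ k ∈ Iio j, a k ≤ ∑ k ∈ Iio j, x ^ ((k : ℕ) + 1) :=
        sum_le_sum fun k hk => hlower k (mem_Iio.1 hk)
    _ = ∑ i ∈ range j, x ^ (i + 1) := by
      rw [← Nat.Iio_eq_range, ← Fin.map_valEmbedding_Iio, sum_map]; rfl
    _ ≤ x / (1 - x) := geom_sum_succ_le h0 h1 j
  have hup : ∑ k ∈ Ioi j, a k ≤ c * (x / (1 - x)) := calc
    ∑ k ∈ Ioi j, a k ≤ c * ∑ k ∈ Ioi j, x ^ ((k : ℕ) - j) := by
      rw [mul_sum]; exact sum_le_sum fun k hk => hupper k (mem_Ioi.1 hk)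
    _ = c * ∑ i ∈ Ioo (j : ℕ) n, x ^ (i - j) := by
      rw [← Fin.map_valEmbedding_Ioi, sum_map]; rfl
    _ ≤ c * (x / (1 - x)) := mul_le_mul_of_nonneg_left (sum_Ioo_pow_sub_le h0 h1 j n) hc
  rw [hsplit, sum_union hdisj]
  linarith

theorem pow_mul_div_pow_eq_mul_inv_pow_sub {q : ℝ} (hq : q ≠ 0) (b : ℝ) {j k : ℕ}
    (h : j ≤ k) :
    q ^ j * b / q ^ k = b * q⁻¹ ^ (k - j) := by
  rw [inv_pow, pow_sub₀ q hq h]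
  field_simp

theorem pow_mul_div_pow_le_inv_pow_succ {q ε : ℝ} (hq : 1 ≤ q) {j n : ℕ} (h : j < n)
    (hε : ε ≤ (q ^ n)⁻¹) (k : ℕ) : q ^ j * ε / q ^ k ≤ q⁻¹ ^ (k + 1) := by
  have hq0 : 0 < q := by linarith
  have hjn : q ^ j * (q ^ n)⁻¹ ≤ q⁻¹ := by
    rw [← div_eq_mul_inv, div_le_iff₀ (by positivity), ← div_eq_inv_mul, le_div_iff₀ hq0,
      ← pow_succ]
    exact pow_le_pow_right₀ hq h
  calc q ^ j * ε / q ^ k ≤ q ^ j * (q ^ n)⁻¹ / q ^ k := by gcongr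
    _ ≤ q⁻¹ / q ^ k := by gcongr
    _ = q⁻¹ ^ (k + 1) := by rw [pow_succ', inv_pow, div_eq_mul_inv]

end Geometric

/-- Let `B = (b_{jk})` be a complex `n×n` matrix with units on the diagonal such that
`|b_{jk}| < 3/2` whenever `j < k` and `|b_{jk}| < 4^{-n}` whenever `j > k`.
Then `B` is non-degenerate, i.e. `det B ≠ 0`. -/
theorem matrix_nondegenerate_of_small_lower_entries
    (n : ℕ) (B : Matrix (Fin n) (Fin n) ℂ)
    (hdiag : ∀ j, B j j = 1)
    (hupper : ∀ j k, j < k → ‖B j k‖ < 3 / 2)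
    (hlower : ∀ j k, k < j → ‖B j k‖ < ((4 : ℝ) ^ n)⁻¹) :
    B.det ≠ 0 := by
  refine B.det_ne_zero_of_sum_row_scaled_lt_diag (w := fun j => (4 : ℂ) ^ (j : ℕ)) (by simp)
    fun j => ?_
  have hnorm (k : Fin n) : ‖(4 : ℂ) ^ (j : ℕ) * B j k / 4 ^ (k : ℕ)‖ =
      4 ^ (j : ℕ) * ‖B j k‖ / 4 ^ (k : ℕ) := by simp
  simp only [hnorm, hdiag, norm_one]
  calc _ ≤ (1 + 3 / 2) * ((4 : ℝ)⁻¹ / (1 - 4⁻¹)) :=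
        Fin.sum_erase_le_of_le_geometric _ j (by norm_num) (by norm_num) (by norm_num)
          (fun k hk => pow_mul_div_pow_le_inv_pow_succ (by norm_num) j.isLt (hlower j k hk).le k)
          (fun k hk => by
            rw [pow_mul_div_pow_eq_mul_inv_pow_sub (by norm_num) _ hk.le]
            gcongr
            exact (hupper j k hk).le)
    _ < 1 := by norm_num
end

section
/- Let a_1,…,a_m be points on the unit sphere 𝕊^n ⊂ ℝ^{n+1} and let G = (g_{uv}) with g_{uv} = ⟨a_u,a_v⟩ be their Gram matrix, so g_{uv} = cos dist_{𝕊^n}(a_u,a_v). Suppose κ > 0 is chosen so that for any u and v one has either |g_{uv} − 1| > κ or |g_{uv} − 1| < κ/4. Then for any vertices u, v, w, if {u,w} and {v,w} are edges of Γ(G,κ) and u ≠ v, then {u,v} is an edge of Γ(G,κ); consequently Γ(G,κ) is a disjoint union of complete graphs and K(G,κ) is a disjoint union of simplices. -/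
/-! On the unit sphere `|⟨x, y⟩ - 1| = ‖x - y‖² / 2`, so the condition `|g_{uv} - 1| < c` says
that `a_u` and `a_v` are at chordal distance less than `√(2c)`. Two points within `√(κ/2)` of a
common point are within `2√(κ/2) = √(2κ)` of each other, so two edges `{u,w}`, `{v,w}` of
`Γ(G,κ)` — which by the gap hypothesis are `κ/4`-edges — force `{u,v}` to be a `κ`-edge. -/

open RealInnerProductSpace

section

variable {E : Type*} [NormedAddCommGroup E] [InnerProductSpace ℝ E]

theorem abs_inner_sub_one_of_norm_eq_one {x y : E} (hx : ‖x‖ = 1) (hy : ‖y‖ = 1) :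
    |⟪x, y⟫ - 1| = ‖x - y‖ ^ 2 / 2 := by
  have hle : ⟪x, y⟫ ≤ 1 := by simpa [hx, hy] using real_inner_le_norm x y
  rw [norm_sub_sq_real, hx, hy, abs_of_nonpos (by linarith)]
  ring

theorem abs_inner_sub_one_lt_of_lt_div_four {x y z : E} (hx : ‖x‖ = 1) (hy : ‖y‖ = 1)
    (hz : ‖z‖ = 1) {c : ℝ} (hxz : |⟪x, z⟫ - 1| < c / 4) (hyz : |⟪y, z⟫ - 1| < c / 4) :
    |⟪x, y⟫ - 1| < c := by
  rw [abs_inner_sub_one_of_norm_eq_one hx hz] at hxz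
  rw [abs_inner_sub_one_of_norm_eq_one hy hz] at hyz
  rw [abs_inner_sub_one_of_norm_eq_one hx hy]
  have htri : ‖x - y‖ ≤ ‖x - z‖ + ‖y - z‖ := by
    simpa only [norm_sub_rev z y] using norm_sub_le_norm_sub_add_norm_sub x z y
  have hsq : ‖x - y‖ ^ 2 ≤ 2 * (‖x - z‖ ^ 2 + ‖y - z‖ ^ 2) := by
    nlinarith [norm_nonneg (x - y), sq_nonneg (‖x - z‖ - ‖y - z‖)]
  linarith

end

theorem equivalence_eq_or_ne_and {α : Type*} {R : α → α → Prop}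
    (symm : ∀ {u v}, R u v → R v u) (trans : ∀ {u v w}, R u v → R v w → R u w) :
    Equivalence (fun u v => u = v ∨ (u ≠ v ∧ R u v)) where
  refl _ := Or.inl rfl
  symm
    | .inl h => .inl h.symm
    | .inr ⟨hne, h⟩ => .inr ⟨hne.symm, symm h⟩
  trans {u v w} huv hvw := by
    by_cases huw : u = w
    · exact .inl huw
    refine .inr ⟨huw, ?_⟩
    rcases huv with rfl | ⟨-, huv⟩
    · exact hvw.resolve_left huw |>.2
    rcases hvw with rfl | ⟨-, hvw⟩
    · exact huv
    · exact trans huv hvw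

theorem gram_graph_union_of_complete_graphs_general
    (n m : ℕ) (a : Fin m → EuclideanSpace ℝ (Fin (n + 1)))
    (hsphere : ∀ u, ‖a u‖ = 1)
    (κ : ℝ)
    (hsep : ∀ u v : Fin m,
      κ < |(inner ℝ (a u) (a v) : ℝ) - 1| ∨ |(inner ℝ (a u) (a v) : ℝ) - 1| < κ / 4) :
    (∀ u v w : Fin m, u ≠ v →
      (u ≠ w ∧ |(inner ℝ (a u) (a w) : ℝ) - 1| < κ) →
      (v ≠ w ∧ |(inner ℝ (a v) (a w) : ℝ) - 1| < κ) →
      (|(inner ℝ (a u) (a v) : ℝ) - 1| < κ)) ∧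
    Equivalence (fun u v : Fin m => u = v ∨
      (u ≠ v ∧ |(inner ℝ (a u) (a v) : ℝ) - 1| < κ)) := by
  have close : ∀ u v w, |⟪a u, a w⟫ - 1| < κ → |⟪a v, a w⟫ - 1| < κ → |⟪a u, a v⟫ - 1| < κ :=
    fun u v w huw hvw => abs_inner_sub_one_lt_of_lt_div_four (hsphere u) (hsphere v) (hsphere w)
      ((hsep u w).resolve_left huw.not_gt) ((hsep v w).resolve_left hvw.not_gt)
  have symm : ∀ {u v}, |⟪a u, a v⟫ - 1| < κ → |⟪a v, a u⟫ - 1| < κ := fun h => by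
    rwa [real_inner_comm]
  exact ⟨fun u v w _ huw hvw => close u v w huw.2 hvw.2,
    equivalence_eq_or_ne_and symm fun huv hvw => close _ _ _ huv (symm hvw)⟩

/-- Let `a₁, …, a_m` be points on the unit sphere `𝕊^n ⊂ ℝ^{n+1}` and let
`g_{uv} = ⟨a_u, a_v⟩ (= cos dist(a_u, a_v))` be their Gram matrix.  Suppose `κ > 0` is such
that for all `u, v` either `|g_{uv} − 1| > κ` or `|g_{uv} − 1| < κ/4`.  Then whenever
`{u,w}` and `{v,w}` are edges of the graph `Γ(G,κ)` (i.e. `u ≠ w`, `|g_{uw} − 1| < κ`,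
etc.) and `u ≠ v`, also `{u,v}` is an edge of `Γ(G,κ)`; consequently the relation
"`u = v` or `{u,v}` is an edge" is an equivalence relation, i.e. `Γ(G,κ)` is a disjoint
union of complete graphs, and hence its clique complex `K(G,κ)` is a disjoint union of
simplices. -/
theorem gram_graph_union_of_complete_graphs
    (n m : ℕ) (a : Fin m → EuclideanSpace ℝ (Fin (n + 1)))
    (hsphere : ∀ u, ‖a u‖ = 1)
    (κ : ℝ) (hκ : 0 < κ)
    (hsep : ∀ u v : Fin m,
      κ < |(inner ℝ (a u) (a v) : ℝ) - 1| ∨ |(inner ℝ (a u) (a v) : ℝ) - 1| < κ / 4) :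
    (∀ u v w : Fin m, u ≠ v →
      (u ≠ w ∧ |(inner ℝ (a u) (a w) : ℝ) - 1| < κ) →
      (v ≠ w ∧ |(inner ℝ (a v) (a w) : ℝ) - 1| < κ) →
      (|(inner ℝ (a u) (a v) : ℝ) - 1| < κ)) ∧
    Equivalence (fun u v : Fin m => u = v ∨
      (u ≠ v ∧ |(inner ℝ (a u) (a v) : ℝ) - 1| < κ)) :=
  gram_graph_union_of_complete_graphs_general n m a hsphere κ hsep
end
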